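/- arXiv:1503.02885 — 3 statements merged into one kernel-verified Lean document; each statement's English description precedes it below -/
import Mathlib

section
/- Let G be a basic graph. Then Breaker has a strategy to prevent Maker from claiming all three edges of any triangle in the unbiased Maker-Breaker game on the edge set of G. -/
namespace TournamentGame

variable {V : Type*} [DecidableEq V]

/-- The underlying undirected edges of a set of oriented edges. -/
def undirect (M : Finset (V × V)) : Finset (Sym2 V) :=
  M.image fun p => s(p.1, p.2)

/-- `MakerWin X F b M B` : in the (1:b) Maker-Breaker game on board `X`, with Maker
having claimed `M`, Breaker having claimed `B`, and Maker to move, Maker has a strategy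
to claim all edges of some winning set (i.e. reach a position with `F` on her edges). -/
inductive MakerWin (X : Finset (Sym2 V)) (F : Finset (Sym2 V) → Prop) (b : ℕ) :
    Finset (Sym2 V) → Finset (Sym2 V) → Prop
  | win (M B : Finset (Sym2 V)) : F M → MakerWin X F b M B
  | move (M B : Finset (Sym2 V)) (e : Sym2 V) (heX : e ∈ X) (hefree : e ∉ M ∪ B)
      (h : ∀ B' : Finset (Sym2 V), B' ⊆ X \ (insert e M ∪ B) →
        B'.card = min b (X \ (insert e M ∪ B)).card →
        MakerWin X F b (insert e M) (B ∪ B')) :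
      MakerWin X F b M B

/-- `BreakerBlock X F b M B` : Maker to move; Breaker has a strategy ensuring that `F`
never holds on Maker's edge set. -/
inductive BreakerBlock (X : Finset (Sym2 V)) (F : Finset (Sym2 V) → Prop) (b : ℕ) :
    Finset (Sym2 V) → Finset (Sym2 V) → Prop
  | step (M B : Finset (Sym2 V)) (hF : ¬ F M) (resp : Sym2 V → Finset (Sym2 V))
      (hsub : ∀ e ∈ X, e ∉ M ∪ B → resp e ⊆ X \ (insert e M ∪ B))
      (hcard : ∀ e ∈ X, e ∉ M ∪ B → (resp e).card = min b (X \ (insert e M ∪ B)).card)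
      (h : ∀ e ∈ X, e ∉ M ∪ B → BreakerBlock X F b (insert e M) (B ∪ resp e)) :
      BreakerBlock X F b M B

/-- Oriented (tournament-game) version of `MakerWin`: Maker claims an edge together with
an orientation; her position is a set of oriented edges. -/
inductive OMakerWin (X : Finset (Sym2 V)) (F : Finset (V × V) → Prop) (b : ℕ) :
    Finset (V × V) → Finset (Sym2 V) → Prop
  | win (M : Finset (V × V)) (B : Finset (Sym2 V)) : F M → OMakerWin X F b M B
  | move (M : Finset (V × V)) (B : Finset (Sym2 V)) (x y : V)
      (heX : s(x, y) ∈ X) (hefree : s(x, y) ∉ undirect M ∪ B)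
      (h : ∀ B' : Finset (Sym2 V), B' ⊆ X \ (insert s(x, y) (undirect M) ∪ B) →
        B'.card = min b (X \ (insert s(x, y) (undirect M) ∪ B)).card →
        OMakerWin X F b (insert (x, y) M) (B ∪ B')) :
      OMakerWin X F b M B

/-- Oriented version of `BreakerBlock`. -/
inductive OBreakerBlock (X : Finset (Sym2 V)) (F : Finset (V × V) → Prop) (b : ℕ) :
    Finset (V × V) → Finset (Sym2 V) → Prop
  | step (M : Finset (V × V)) (B : Finset (Sym2 V)) (hF : ¬ F M)
      (resp : V → V → Finset (Sym2 V))
      (hsub : ∀ x y : V, s(x, y) ∈ X → s(x, y) ∉ undirect M ∪ B →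
        resp x y ⊆ X \ (insert s(x, y) (undirect M) ∪ B))
      (hcard : ∀ x y : V, s(x, y) ∈ X → s(x, y) ∉ undirect M ∪ B →
        (resp x y).card = min b (X \ (insert s(x, y) (undirect M) ∪ B)).card)
      (h : ∀ x y : V, s(x, y) ∈ X → s(x, y) ∉ undirect M ∪ B →
        OBreakerBlock X F b (insert (x, y) M) (B ∪ resp x y)) :
      OBreakerBlock X F b M B

/-- Position with Breaker to move, in the unoriented game: Breaker can respond and
then keep blocking forever. -/
def BreakerTurn (X : Finset (Sym2 V)) (F : Finset (Sym2 V) → Prop) (b : ℕ)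
    (M B : Finset (Sym2 V)) : Prop :=
  ¬ F M ∧ ∃ B' : Finset (Sym2 V), B' ⊆ X \ (M ∪ B) ∧
    B'.card = min b (X \ (M ∪ B)).card ∧ BreakerBlock X F b M (B ∪ B')

/-- Position with Breaker to move, in the oriented game. -/
def OBreakerTurn (X : Finset (Sym2 V)) (F : Finset (V × V) → Prop) (b : ℕ)
    (M : Finset (V × V)) (B : Finset (Sym2 V)) : Prop :=
  ¬ F M ∧ ∃ B' : Finset (Sym2 V), B' ⊆ X \ (undirect M ∪ B) ∧
    B'.card = min b (X \ (undirect M ∪ B)).card ∧ OBreakerBlock X F b M (B ∪ B')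

/-- Winning sets of the triangle game. -/
def HasTriangle (M : Finset (Sym2 V)) : Prop :=
  ∃ x y z : V, x ≠ y ∧ y ≠ z ∧ x ≠ z ∧ s(x, y) ∈ M ∧ s(y, z) ∈ M ∧ s(x, z) ∈ M

/-- Maker's oriented edges contain a cyclic (directed) triangle. -/
def HasCyclicTriangle (M : Finset (V × V)) : Prop :=
  ∃ x y z : V, x ≠ y ∧ y ≠ z ∧ x ≠ z ∧ (x, y) ∈ M ∧ (y, z) ∈ M ∧ (z, x) ∈ M

/-- Maker's oriented edges contain an acyclic (transitive) triangle. -/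
def HasAcyclicTriangle (M : Finset (V × V)) : Prop :=
  ∃ x y z : V, x ≠ y ∧ y ≠ z ∧ x ≠ z ∧ (x, y) ∈ M ∧ (y, z) ∈ M ∧ (x, z) ∈ M

/-- A tournament on `Fin k`, given by its arc relation. -/
def IsTournament {k : ℕ} (T : Fin k → Fin k → Prop) : Prop :=
  (∀ i, ¬ T i i) ∧ ∀ i j : Fin k, i ≠ j → (T i j ↔ ¬ T j i)

/-- Maker's oriented edges contain a copy of the tournament `T`. -/
def HasTCopy {k : ℕ} (T : Fin k → Fin k → Prop) (M : Finset (V × V)) : Prop :=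
  ∃ f : Fin k → V, Function.Injective f ∧ ∀ i j : Fin k, T i j → (f i, f j) ∈ M

/-- The edge set of the complete graph `K_n`. -/
def completeEdges (n : ℕ) : Finset (Sym2 (Fin n)) :=
  Finset.univ.filter fun e => ¬ e.IsDiag

/-- The edge set of the Turán graph `T_{n,k}` : classes are residues mod `k`. -/
def turanEdges (n k : ℕ) : Finset (Sym2 (Fin n)) :=
  Finset.univ.filter fun e => ¬ (e.map fun v : Fin n => v.val % k).IsDiag

/-- `A` contains a good copy of `K_k` (all vertices in distinct classes of `T_{n,k}`). -/
def GoodCopy (n k : ℕ) (A : Finset (Sym2 (Fin n))) : Prop :=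
  ∃ f : Fin k → Fin n, Function.Injective f ∧
    (∀ i j : Fin k, i ≠ j → (f i).val % k ≠ (f j).val % k) ∧
    (∀ i j : Fin k, i ≠ j → s(f i, f j) ∈ A)

open Classical in
/-- Probability that a `p`-random subset `A` of `E` (each element kept independently with
probability `p`) satisfies `P`. This is the model `G(E, p)`. -/
noncomputable def edgeProb {α : Type*} [DecidableEq α] (E : Finset α) (p : ℝ)
    (P : Finset α → Prop) : ℝ :=
  ∑ A ∈ E.powerset, if P A then p ^ A.card * (1 - p) ^ (E.card - A.card) else 0

open Classical in
/-- Probability that a uniformly random `M`-element subset of `E` satisfies `P`.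
This is the model `G(E, M)`. -/
noncomputable def uniformProb {α : Type*} [DecidableEq α] (E : Finset α) (M : ℕ)
    (P : Finset α → Prop) : ℝ :=
  ((E.powerset.filter fun A => A.card = M ∧ P A).card : ℝ) /
    ((E.powerset.filter fun A => A.card = M).card : ℝ)

/-- The three edges of a triangle on `x`, `y`, `z`. -/
def triEdges (x y z : V) : Finset (Sym2 V) := {s(x, y), s(y, z), s(x, z)}

/-- `x`, `y`, `z` form a triangle of the graph with edge set `A`. -/
def IsTriangleIn (A : Finset (Sym2 V)) (x y z : V) : Prop :=
  x ≠ y ∧ y ≠ z ∧ x ≠ z ∧ s(x, y) ∈ A ∧ s(y, z) ∈ A ∧ s(x, z) ∈ A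

/-- The triangles of `A`, each recorded as its set of three edges: the vertex set of `T_A`. -/
def TriSets (A : Finset (Sym2 V)) : Set (Finset (Sym2 V)) :=
  {t | ∃ x y z : V, IsTriangleIn A x y z ∧ t = triEdges x y z}

/-- `C` is a triangle collection: every edge lies in a triangle and the graph `T_C` of
triangles (adjacent iff sharing an edge) is connected. -/
def IsTriangleCollection (C : Finset (Sym2 V)) : Prop :=
  (∀ e ∈ C, ∃ x y z : V, IsTriangleIn C x y z ∧ e ∈ triEdges x y z) ∧
  ∀ t ∈ TriSets C, ∀ t' ∈ TriSets C,
    Relation.ReflTransGen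
      (fun a b => a ∈ TriSets C ∧ b ∈ TriSets C ∧ (a ∩ b).Nonempty) t t'

/-- Adjacency of `K₃⁺`: a triangle on `{0,1,2}` with a pendant edge `{2,3}`. -/
def K3plusAdj (a b : Fin 4) : Prop :=
  (a.val < 3 ∧ b.val < 3 ∧ a ≠ b) ∨ (a.val = 2 ∧ b.val = 3) ∨ (a.val = 3 ∧ b.val = 2)

/-- Adjacency of the path on `Fin m`. -/
def pathAdj {m : ℕ} (a b : Fin m) : Prop := a.val + 1 = b.val ∨ b.val + 1 = a.val

/-- `C` is very basic: `T_C` is (isomorphic to) a subgraph of `K₃⁺` or of a path `P_m`. -/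
def VeryBasic (C : Finset (Sym2 V)) : Prop :=
  (∃ φ : TriSets C → Fin 4, Function.Injective φ ∧
    ∀ t t' : TriSets C, t ≠ t' → ((t : Finset (Sym2 V)) ∩ (t' : Finset (Sym2 V))).Nonempty →
      K3plusAdj (φ t) (φ t')) ∨
  (∃ m : ℕ, ∃ φ : TriSets C → Fin m, Function.Injective φ ∧
    ∀ t t' : TriSets C, t ≠ t' → ((t : Finset (Sym2 V)) ∩ (t' : Finset (Sym2 V))).Nonempty →
      pathAdj (φ t) (φ t'))

/-- `C` is basic: there are distinct edges `e₁, e₂` with `C - eᵢ` very basic for both. -/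
def Basic (C : Finset (Sym2 V)) : Prop :=
  ∃ e₁ ∈ C, ∃ e₂ ∈ C, e₁ ≠ e₂ ∧ VeryBasic (C.erase e₁) ∧ VeryBasic (C.erase e₂)

open Classical in
/-- The set of non-isolated vertices of the graph with edge set `C`. -/
noncomputable def support [Fintype V] (C : Finset (Sym2 V)) : Finset V :=
  Finset.univ.filter fun v => ∃ e ∈ C, v ∈ e

open Classical in
/-- Degree of `v` in the graph with edge set `C`. -/
noncomputable def degreeIn (C : Finset (Sym2 V)) (v : V) : ℕ :=
  (C.filter fun e => v ∈ e).card

/-- The maximum density `m(C) = max_{H ⊆ C} e(H)/v(H)` is (strictly) less than `r`. -/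
def MaxDensityLt [Fintype V] (C : Finset (Sym2 V)) (r : ℝ) : Prop :=
  ∀ D ⊆ C, D.Nonempty → (D.card : ℝ) / ((support D).card : ℝ) < r

/-- The edge set of the `k`-wheel: a cycle on `{0, …, k-1} ⊆ Fin (k+1)` together with
all edges to the center, the vertex `k`. -/
def wheelEdges (k : ℕ) : Finset (Sym2 (Fin (k + 1))) :=
  ((Finset.univ : Finset (Fin k)).image fun i =>
    s((⟨i.val, by have := i.2; omega⟩ : Fin (k + 1)),
      (⟨(i.val + 1) % k, by have := i.2; exact Nat.lt_succ_of_lt (Nat.mod_lt _ (by omega))⟩ :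
        Fin (k + 1)))) ∪
  ((Finset.univ : Finset (Fin k)).image fun i =>
    s((⟨i.val, by have := i.2; omega⟩ : Fin (k + 1)), (Fin.last k)))

lemma mem_triEdges {x y z : V} {e : Sym2 V} :
    e ∈ triEdges x y z ↔ e = s(x, y) ∨ e = s(y, z) ∨ e = s(x, z) := by
  simp [triEdges]

/-- The pairing invariant. -/
def GoodPairing (X M B : Finset (Sym2 V)) (P : Finset (Finset (Sym2 V))) : Prop :=
  (∀ p ∈ P, p.card = 2 ∧ p ⊆ X \ (M ∪ B)) ∧
  (∀ p ∈ P, ∀ q ∈ P, p ≠ q → Disjoint p q) ∧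
  (∀ x y z : V, IsTriangleIn X x y z → (∀ e ∈ triEdges x y z, e ∉ B) →
    ∃ p ∈ P, p ⊆ triEdges x y z)

lemma noTriangle_of_pairing {X M B : Finset (Sym2 V)} {P : Finset (Finset (Sym2 V))}
    (hMX : M ⊆ X) (hMB : ∀ e ∈ M, e ∉ B) (hP : GoodPairing X M B P) :
    ¬ HasTriangle M := by
  rintro ⟨x, y, z, hxy, hyz, hxz, h1, h2, h3⟩
  have htri : IsTriangleIn X x y z := ⟨hxy, hyz, hxz, hMX h1, hMX h2, hMX h3⟩
  have hsubM : triEdges x y z ⊆ M := by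
    intro e he
    rcases mem_triEdges.1 he with rfl | rfl | rfl <;> assumption
  obtain ⟨p, hpP, hpsub⟩ := hP.2.2 x y z htri (fun e he => hMB e (hsubM he))
  obtain ⟨hc, hsub⟩ := hP.1 p hpP
  have : p.Nonempty := Finset.card_pos.1 (by omega)
  obtain ⟨g, hg⟩ := this
  have hgM : g ∈ M := hsubM (hpsub hg)
  have := hsub hg
  simp [Finset.mem_sdiff, Finset.mem_union] at this
  exact this.2.1 hgM

lemma breaker_of_pairing (X : Finset (Sym2 V)) :
    ∀ n (M B : Finset (Sym2 V)), (X \ (M ∪ B)).card ≤ n → M ⊆ X → (∀ e ∈ M, e ∉ B) →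
    (∃ P, GoodPairing X M B P) → BreakerBlock X HasTriangle 1 M B := by
  classical
  intro n
  induction n with
  | zero =>
    intro M B hcard hMX hMB ⟨P, hP⟩
    refine BreakerBlock.step M B (noTriangle_of_pairing hMX hMB hP) (fun _ => ∅) ?_ ?_ ?_ <;>
    · intro e heX hefree
      exfalso
      have : e ∈ X \ (M ∪ B) := Finset.mem_sdiff.2 ⟨heX, hefree⟩
      have := Finset.card_pos.2 ⟨e, this⟩
      omega
  | succ n ih =>
    intro M B hcard hMX hMB ⟨P, hP⟩
    set resp : Sym2 V → Finset (Sym2 V) := fun e =>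
      if h1 : ∃ p ∈ P, e ∈ p then h1.choose.erase e
      else if h2 : (X \ (insert e M ∪ B)).Nonempty then {h2.choose} else ∅ with hresp
    have hrespsub : ∀ e ∈ X, e ∉ M ∪ B → resp e ⊆ X \ (insert e M ∪ B) := by
      intro e heX he
      rw [hresp]
      dsimp only
      split_ifs with h1 h2
      · obtain ⟨hpP, hep⟩ := h1.choose_spec
        obtain ⟨hc2, hsub⟩ := hP.1 _ hpP
        intro g hg
        rw [Finset.mem_erase] at hg
        have := hsub hg.2
        rw [Finset.mem_sdiff] at this ⊢
        refine ⟨this.1, ?_⟩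
        rw [Finset.mem_union, Finset.mem_insert] at *
        push_neg
        exact ⟨⟨hg.1, fun h => (this.2 (Or.inl h)).elim⟩, fun h => (this.2 (Or.inr h)).elim⟩
      · intro g hg
        rw [Finset.mem_singleton] at hg
        subst hg
        exact h2.choose_spec
      · intro g hg; simp at hg
    have hrespcard : ∀ e ∈ X, e ∉ M ∪ B → (resp e).card = min 1 (X \ (insert e M ∪ B)).card := by
      intro e heX he
      have hsub := hrespsub e heX he
      rw [hresp]
      dsimp only
      split_ifs with h1 h2
      · obtain ⟨hpP, hep⟩ := h1.choose_spec
        obtain ⟨hc2, _⟩ := hP.1 _ hpP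
        have hce : (h1.choose.erase e).card = 1 := by
          rw [Finset.card_erase_of_mem hep, hc2]
        rw [hce]
        have hne : (X \ (insert e M ∪ B)).Nonempty := by
          have : (h1.choose.erase e).Nonempty := Finset.card_pos.1 (by omega)
          obtain ⟨g, hg⟩ := this
          exact ⟨g, by
            have := hrespsub e heX he
            rw [hresp] at this; dsimp only at this; rw [dif_pos h1] at this
            exact this hg⟩
        have h3 := Finset.card_pos.2 hne
        have h4 : min 1 (X \ (insert e M ∪ B)).card = 1 := min_eq_left (by omega)
        omega
      · have h3 := Finset.card_pos.2 h2
        have h4 : min 1 (X \ (insert e M ∪ B)).card = 1 := min_eq_left (by omega)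
        rw [Finset.card_singleton, h4]
      · rw [Finset.not_nonempty_iff_eq_empty] at h2
        rw [h2]
        simp
    refine BreakerBlock.step M B (noTriangle_of_pairing hMX hMB hP) resp hrespsub hrespcard ?_
    intro e heX he
    have hefree : e ∈ X \ (M ∪ B) := Finset.mem_sdiff.2 ⟨heX, he⟩
    apply ih
    · -- card decrease
      have hsub2 : X \ (insert e M ∪ (B ∪ resp e)) ⊆ (X \ (M ∪ B)).erase e := by
        intro g hg
        simp only [Finset.mem_sdiff, Finset.mem_union, Finset.mem_insert, not_or,
          Finset.mem_erase] at hg ⊢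
        tauto
      calc (X \ (insert e M ∪ (B ∪ resp e))).card ≤ ((X \ (M ∪ B)).erase e).card :=
            Finset.card_le_card hsub2
        _ = (X \ (M ∪ B)).card - 1 := Finset.card_erase_of_mem hefree
        _ ≤ n := by omega
    · exact Finset.insert_subset heX hMX
    · intro g hg
      rw [Finset.mem_insert] at hg
      rw [Finset.mem_union]
      push_neg
      have hrsub := hrespsub e heX he
      rcases hg with rfl | hg
      · constructor
        · intro h; exact he (Finset.mem_union_right _ h)
        · intro h
          have := hrsub h
          rw [Finset.mem_sdiff, Finset.mem_union, Finset.mem_insert] at this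
          push_neg at this
          exact this.2.1.1 rfl
      · constructor
        · exact hMB g hg
        · intro h
          have := hrsub h
          rw [Finset.mem_sdiff, Finset.mem_union, Finset.mem_insert] at this
          push_neg at this
          exact this.2.1.2 hg
    · -- new pairing
      refine ⟨P.filter (fun q => e ∉ q ∧ Disjoint (resp e) q), ?_, ?_, ?_⟩
      · intro p hp
        rw [Finset.mem_filter] at hp
        obtain ⟨hpP, hpe, hpd⟩ := hp
        obtain ⟨hc2, hsub⟩ := hP.1 p hpP
        refine ⟨hc2, ?_⟩
        intro g hg
        have := hsub hg
        rw [Finset.mem_sdiff] at this ⊢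
        refine ⟨this.1, ?_⟩
        simp only [Finset.mem_union, Finset.mem_insert] at this ⊢
        push_neg at this ⊢
        refine ⟨⟨fun h => hpe (h ▸ hg), this.2.1⟩, this.2.2, ?_⟩
        intro hgr
        exact (Finset.disjoint_left.1 hpd hgr) hg
      · intro p hp q hq hpq
        rw [Finset.mem_filter] at hp hq
        exact hP.2.1 p hp.1 q hq.1 hpq
      · intro x y z htri hB
        have hB' : ∀ g ∈ triEdges x y z, g ∉ B := by
          intro g hg hgB
          exact hB g hg (Finset.mem_union_left _ hgB)
        obtain ⟨q, hqP, hqsub⟩ := hP.2.2 x y z htri hB'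
        refine ⟨q, Finset.mem_filter.2 ⟨hqP, ?_, ?_⟩, hqsub⟩
        · -- e ∉ q
          intro heq
          -- then resp e = pair.erase e with pair = q basically; the other elt lands in B
          have h1 : ∃ p ∈ P, e ∈ p := ⟨q, hqP, heq⟩
          obtain ⟨hpP, hep⟩ := h1.choose_spec
          have hqp : q = h1.choose := by
            by_contra hne
            exact (Finset.disjoint_left.1 (hP.2.1 q hqP _ hpP hne) heq) hep
          -- resp e = q.erase e, which is nonempty (card 1), its element is in triEdges and in B∪resp
          have hre : resp e = h1.choose.erase e := by rw [hresp]; dsimp only; rw [dif_pos h1]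
          have hc2 := (hP.1 q hqP).1
          have : (q.erase e).Nonempty := by
            rw [← Finset.card_pos, Finset.card_erase_of_mem heq, hc2]
            norm_num
          obtain ⟨g, hg⟩ := this
          have hgr : g ∈ resp e := by rw [hre, ← hqp]; exact hg
          have hgt : g ∈ triEdges x y z := hqsub (Finset.mem_of_mem_erase hg)
          exact hB g hgt (Finset.mem_union_right _ hgr)
        · -- Disjoint (resp e) q
          rw [Finset.disjoint_left]
          intro g hgr hgq
          have hgt : g ∈ triEdges x y z := hqsub hgq
          exact hB g hgt (Finset.mem_union_right _ hgr)


lemma triEdges_perm₁ (x y z : V) : triEdges y x z = triEdges x y z := by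
  refine Finset.ext fun e => ?_
  induction e using Sym2.inductionOn with
  | hf u v => simp only [mem_triEdges, Sym2.eq_iff]; tauto

lemma triEdges_perm₂ (x y z : V) : triEdges x z y = triEdges x y z := by
  refine Finset.ext fun e => ?_
  induction e using Sym2.inductionOn with
  | hf u v => simp only [mem_triEdges, Sym2.eq_iff]; tauto

lemma triEdges_card {x y z : V} (hxy : x ≠ y) (hyz : y ≠ z) (hxz : x ≠ z) :
    (triEdges x y z).card = 3 := by
  rw [triEdges, Finset.card_insert_of_notMem, Finset.card_insert_of_notMem,
    Finset.card_singleton]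
  · simp only [Finset.mem_singleton, Sym2.eq_iff]; tauto
  · simp only [Finset.mem_insert, Finset.mem_singleton, Sym2.eq_iff]; tauto

lemma triEdges_nonempty {x y z : V} : (triEdges x y z).Nonempty :=
  ⟨s(x,y), by rw [mem_triEdges]; tauto⟩

set_option linter.unusedSectionVars false

lemma triEdges_perm₃ (x y z : V) : triEdges z y x = triEdges x y z := by
  refine Finset.ext fun e => ?_
  induction e using Sym2.inductionOn with
  | hf u v => simp only [mem_triEdges, Sym2.eq_iff]; tauto

lemma triEdges_perm₄ (x y z : V) : triEdges y z x = triEdges x y z := by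
  refine Finset.ext fun e => ?_
  induction e using Sym2.inductionOn with
  | hf u v => simp only [mem_triEdges, Sym2.eq_iff]; tauto

lemma triEdges_perm₅ (x y z : V) : triEdges z x y = triEdges x y z := by
  refine Finset.ext fun e => ?_
  induction e using Sym2.inductionOn with
  | hf u v => simp only [mem_triEdges, Sym2.eq_iff]; tauto

lemma isTriangleIn_perm₁ {A : Finset (Sym2 V)} {x y z : V} (h : IsTriangleIn A x y z) :
    IsTriangleIn A y x z := by
  obtain ⟨h1, h2, h3, h4, h5, h6⟩ := h
  exact ⟨h1.symm, h3, h2, by rwa [Sym2.eq_swap], h6, h5⟩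

lemma isTriangleIn_perm₂ {A : Finset (Sym2 V)} {x y z : V} (h : IsTriangleIn A x y z) :
    IsTriangleIn A x z y := by
  obtain ⟨h1, h2, h3, h4, h5, h6⟩ := h
  exact ⟨h3, h2.symm, h1, h6, by rwa [Sym2.eq_swap], h4⟩

/-- Normalization: two distinct edges of a triangle can be written as `s(a,b), s(b,c)`. -/
lemma normalize2 {A : Finset (Sym2 V)} {x y z : V} {g h : Sym2 V}
    (ht : IsTriangleIn A x y z) (hgh : g ≠ h)
    (hg : g ∈ triEdges x y z) (hh : h ∈ triEdges x y z) :
    ∃ a b c : V, IsTriangleIn A a b c ∧ triEdges a b c = triEdges x y z ∧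
      g = s(a, b) ∧ h = s(b, c) := by
  obtain ⟨h1, h2, h3, h4, h5, h6⟩ := ht
  have pzyx : IsTriangleIn A z y x :=
    ⟨Ne.symm h2, Ne.symm h1, Ne.symm h3, by rwa [Sym2.eq_swap], by rwa [Sym2.eq_swap],
      by rwa [Sym2.eq_swap]⟩
  have pyzx : IsTriangleIn A y z x :=
    ⟨h2, Ne.symm h3, Ne.symm h1, h5, by rwa [Sym2.eq_swap], by rwa [Sym2.eq_swap]⟩
  have pzxy : IsTriangleIn A z x y :=
    ⟨Ne.symm h3, h1, Ne.symm h2, by rwa [Sym2.eq_swap], h4, by rwa [Sym2.eq_swap]⟩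
  have pyxz : IsTriangleIn A y x z :=
    ⟨Ne.symm h1, h3, h2, by rwa [Sym2.eq_swap], h6, h5⟩
  have pxzy : IsTriangleIn A x z y :=
    ⟨h3, Ne.symm h2, h1, h6, by rwa [Sym2.eq_swap], h4⟩
  have ht : IsTriangleIn A x y z := ⟨h1, h2, h3, h4, h5, h6⟩
  rcases mem_triEdges.1 hg with rfl | rfl | rfl <;> rcases mem_triEdges.1 hh with rfl | rfl | rfl
  · exact absurd rfl hgh
  · exact ⟨x, y, z, ht, rfl, rfl, rfl⟩
  · exact ⟨y, x, z, pyxz, triEdges_perm₁ x y z, Sym2.eq_swap, rfl⟩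
  · exact ⟨z, y, x, pzyx, triEdges_perm₃ x y z, Sym2.eq_swap, Sym2.eq_swap⟩
  · exact absurd rfl hgh
  · exact ⟨y, z, x, pyzx, triEdges_perm₄ x y z, rfl, Sym2.eq_swap⟩
  · exact ⟨z, x, y, pzxy, triEdges_perm₅ x y z, Sym2.eq_swap, rfl⟩
  · exact ⟨x, z, y, pxzy, triEdges_perm₂ x y z, rfl, Sym2.eq_swap⟩
  · exact absurd rfl hgh

lemma mem_TriSets {A : Finset (Sym2 V)} {x y z : V} (h : IsTriangleIn A x y z) :
    triEdges x y z ∈ TriSets A := ⟨x, y, z, h, rfl⟩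

lemma TriSets_subset {A : Finset (Sym2 V)} {t : Finset (Sym2 V)} (h : t ∈ TriSets A) :
    t ⊆ A := by
  obtain ⟨x, y, z, ht, rfl⟩ := h
  intro e he
  rcases mem_triEdges.1 he with rfl | rfl | rfl
  exacts [ht.2.2.2.1, ht.2.2.2.2.1, ht.2.2.2.2.2]

lemma TriSets_nonempty {A : Finset (Sym2 V)} {t : Finset (Sym2 V)} (h : t ∈ TriSets A) :
    t.Nonempty := by obtain ⟨x, y, z, _, rfl⟩ := h; exact triEdges_nonempty

/-- Two distinct triangles share at most one edge. -/
lemma shared_edge_unique {A : Finset (Sym2 V)} {t t' : Finset (Sym2 V)}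
    (ht : t ∈ TriSets A) (ht' : t' ∈ TriSets A) (hne : t ≠ t')
    {g h : Sym2 V} (hgt : g ∈ t) (hgt' : g ∈ t') (hht : h ∈ t) (hht' : h ∈ t') :
    g = h := by
  by_contra hgh
  obtain ⟨x, y, z, htri, rfl⟩ := ht
  obtain ⟨x', y', z', htri', rfl⟩ := ht'
  obtain ⟨a, b, c, hT, hE, rfl, rfl⟩ := normalize2 htri hgh hgt hht
  obtain ⟨a', b', c', hT', hE', hg', hh'⟩ := normalize2 htri' hgh hgt' hht'
  rw [Sym2.eq_iff] at hg' hh'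
  have h1 : a ≠ b := hT.1
  have h2 : b ≠ c := hT.2.1
  have h3 : a ≠ c := hT.2.2.1
  have h2' : b' ≠ c' := hT'.2.1
  rcases hg' with ⟨ha, hb⟩ | ⟨ha, hb⟩ <;> rcases hh' with ⟨hb2, hc2⟩ | ⟨hb2, hc2⟩
  · subst ha; subst hb; subst hc2
    exact hne (hE.symm.trans hE')
  · exact h2' (hb.symm.trans hb2)
  · exact h1 (ha.trans hb2.symm)
  · exact h3 (ha.trans hc2.symm)

set_option maxHeartbeats 2000000 in
/-- Three pairwise edge-sharing triangles either share a common edge (a book),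
or there is a fourth triangle sharing an edge with each of them. -/
lemma book_or_K4 {A : Finset (Sym2 V)} {t₀ t₁ t₂ : Finset (Sym2 V)}
    (h0 : t₀ ∈ TriSets A) (h1 : t₁ ∈ TriSets A) (h2 : t₂ ∈ TriSets A)
    (h01 : t₀ ≠ t₁) (h02 : t₀ ≠ t₂) (h12 : t₁ ≠ t₂)
    (s01 : (t₀ ∩ t₁).Nonempty) (s02 : (t₀ ∩ t₂).Nonempty) (s12 : (t₁ ∩ t₂).Nonempty) :
    (∃ g, g ∈ t₀ ∧ g ∈ t₁ ∧ g ∈ t₂) ∨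
    (∃ t₃ ∈ TriSets A, t₃ ≠ t₀ ∧ t₃ ≠ t₁ ∧ t₃ ≠ t₂ ∧
      (t₃ ∩ t₀).Nonempty ∧ (t₃ ∩ t₁).Nonempty ∧ (t₃ ∩ t₂).Nonempty) := by
  obtain ⟨g01, hg01⟩ := s01
  obtain ⟨g02, hg02⟩ := s02
  obtain ⟨g12, hg12⟩ := s12
  rw [Finset.mem_inter] at hg01 hg02 hg12
  by_cases e1 : g01 = g02
  · exact Or.inl ⟨g01, hg01.1, hg01.2, e1 ▸ hg02.2⟩
  by_cases e2 : g01 = g12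
  · exact Or.inl ⟨g01, hg01.1, hg01.2, e2 ▸ hg12.2⟩
  by_cases e3 : g02 = g12
  · exact Or.inl ⟨g02, hg02.1, e3 ▸ hg12.1, hg02.2⟩
  -- all three shared edges are distinct
  obtain ⟨x0, y0, z0, htri0, rfl⟩ := h0
  obtain ⟨x1, y1, z1, htri1, rfl⟩ := h1
  obtain ⟨x2, y2, z2, htri2, rfl⟩ := h2
  obtain ⟨a, b, c, hT0, hE0, hgE1, hgE2⟩ := normalize2 htri0 e1 hg01.1 hg02.1
  obtain ⟨a1, b1, c1, hT1, hE1, hgF1, hgF2⟩ := normalize2 htri1 e2 hg01.2 hg12.1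
  obtain ⟨a2, b2, c2, hT2, hE2, hgG1, hgG2⟩ := normalize2 htri2 e3 hg02.2 hg12.2
  have E1 : s(a, b) = s(a1, b1) := hgE1 ▸ hgF1
  have E2 : s(b, c) = s(a2, b2) := hgE2 ▸ hgG1
  have E3 : s(b1, c1) = s(b2, c2) := hgF2 ▸ hgG2
  rw [Sym2.eq_iff] at E1 E2
  have d1 : a ≠ b := hT0.1
  have d2 : b ≠ c := hT0.2.1
  have d3 : a ≠ c := hT0.2.2.1
  rcases E1 with ⟨ha1, hb1⟩ | ⟨ha1, hb1⟩ <;> rcases E2 with ⟨ha2, hb2⟩ | ⟨ha2, hb2⟩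
  · -- b1 = b, a2 = b, b2 = c
    exfalso
    rw [← hb1, ← hb2, Sym2.eq_iff] at E3
    rcases E3 with ⟨h, _⟩ | ⟨_, h⟩
    · exact d2 h
    · exact e3 (by rw [hgE2, hgF2, ← hb1, h])
  · -- a1 = a, b1 = b, b2 = b, a2 = c : main construction
    rw [← hb1, ← ha2, Sym2.eq_iff] at E3
    rcases E3 with ⟨_, hw⟩ | ⟨hbc2, hc1b⟩
    · -- c1 = c2
      have hT1' : IsTriangleIn A a b c1 := by rwa [← ha1, ← hb1] at hT1
      have hT2' : IsTriangleIn A c b c1 := by rwa [← hb2, ← ha2, ← hw] at hT2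
      have dw1 : a ≠ c1 := hT1'.2.2.1
      have dw2 : b ≠ c1 := hT1'.2.1
      have dw3 : c ≠ c1 := hT2'.2.2.1
      have dw1' : c1 ≠ a := dw1.symm
      have dw2' : c1 ≠ b := dw2.symm
      have dw3' : c1 ≠ c := dw3.symm
      have d1' : b ≠ a := d1.symm
      have d2' : c ≠ b := d2.symm
      have d3' : c ≠ a := d3.symm
      have hT3 : IsTriangleIn A a c c1 :=
        ⟨d3, dw3, dw1, hT0.2.2.2.2.2, hT2'.2.2.2.2.2, hT1'.2.2.2.2.2⟩
      refine Or.inr ⟨triEdges a c c1, mem_TriSets hT3, ?_, ?_, ?_, ?_, ?_, ?_⟩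
      · intro heq
        have hm : s(a, c1) ∈ triEdges x0 y0 z0 := by
          rw [← heq, mem_triEdges]; tauto
        rw [← hE0, mem_triEdges] at hm
        rcases hm with h | h | h <;> rw [Sym2.eq_iff] at h <;> tauto
      · intro heq
        have hm : s(a, c) ∈ triEdges x1 y1 z1 := by
          rw [← heq, mem_triEdges]; tauto
        rw [← hE1, ← ha1, ← hb1, mem_triEdges] at hm
        rcases hm with h | h | h <;> rw [Sym2.eq_iff] at h <;> tauto
      · intro heq
        have hm : s(a, c) ∈ triEdges x2 y2 z2 := by
          rw [← heq, mem_triEdges]; tauto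
        rw [← hE2, ← hb2, ← ha2, ← hw, mem_triEdges] at hm
        rcases hm with h | h | h <;> rw [Sym2.eq_iff] at h <;> tauto
      · refine ⟨s(a, c), Finset.mem_inter.2 ⟨by rw [mem_triEdges]; tauto, ?_⟩⟩
        rw [← hE0, mem_triEdges]; tauto
      · refine ⟨s(a, c1), Finset.mem_inter.2 ⟨by rw [mem_triEdges]; tauto, ?_⟩⟩
        rw [← hE1, ← ha1, ← hb1, mem_triEdges]; tauto
      · refine ⟨s(c, c1), Finset.mem_inter.2 ⟨by rw [mem_triEdges]; tauto, ?_⟩⟩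
        rw [← hE2, ← hb2, ← ha2, ← hw, mem_triEdges]; tauto
    · -- c1 = b : contradiction with b1 ≠ c1
      exact absurd (hb1.symm.trans hc1b.symm) hT1.2.1
  · -- a = b1, b = a1, a2 = b, b2 = c : t₁ = t₀
    exfalso
    rw [← ha1, ← hb2, Sym2.eq_iff] at E3
    rcases E3 with ⟨h, _⟩ | ⟨_, h⟩
    · exact d3 h
    · apply h01
      rw [← hE0, ← hE1, ← hb1, ← ha1, h]
      exact (triEdges_perm₁ a b c).symm
  · -- a = b1, b = a1, b = b2, c = a2 : g12 = g01
    exfalso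
    rw [← ha1, ← ha2, Sym2.eq_iff] at E3
    rcases E3 with ⟨h, _⟩ | ⟨_, h⟩
    · exact d1 h
    · exact e2 (by rw [hgE1, hgF2, ← ha1, h])


/-- Discard function for a path-like family of triangles. -/
lemma exists_discard_core {D : Finset (Sym2 V)} (f : Sym2 V) (ψ : Finset (Sym2 V) → ℕ)
    (hinj : ∀ t ∈ TriSets D, ∀ t' ∈ TriSets D, ψ t = ψ t' → t = t')
    (hadj : ∀ t ∈ TriSets D, ∀ t' ∈ TriSets D, t ≠ t' → (t ∩ t').Nonempty →
      ψ t = ψ t' + 1 ∨ ψ t' = ψ t + 1) :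
    ∃ d : Finset (Sym2 V) → Sym2 V,
      (∀ t ∈ TriSets D, d t ∈ t) ∧ (∀ t ∈ TriSets D, f ∈ t → d t = f) ∧
      (∀ t ∈ TriSets D, ∀ t' ∈ TriSets D, t ≠ t' → ∀ g ∈ t ∩ t', d t = g ∨ d t' = g) := by
  classical
  set p : ℕ := if h : ∃ t, t ∈ TriSets D ∧ f ∈ t then ψ h.choose else 0 with hpdef
  have hp1 : ∀ h : (∃ t, t ∈ TriSets D ∧ f ∈ t), p = ψ h.choose := fun h => by
    rw [hpdef, dif_pos h]
  set dL : Finset (Sym2 V) → Sym2 V := fun t =>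
    if h : ∃ g, g ∈ t ∧ ∃ u, u ∈ TriSets D ∧ u ≠ t ∧ ψ u + 1 = ψ t ∧ g ∈ u then h.choose
    else if hne : t.Nonempty then hne.choose else f with hdLdef
  set dR : Finset (Sym2 V) → Sym2 V := fun t =>
    if h : ∃ g, g ∈ t ∧ ∃ u, u ∈ TriSets D ∧ u ≠ t ∧ ψ t + 1 = ψ u ∧ g ∈ u then h.choose
    else if hne : t.Nonempty then hne.choose else f with hdRdef
  have hdLmem : ∀ t ∈ TriSets D, dL t ∈ t := by
    intro t ht
    rw [hdLdef]
    dsimp only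
    split_ifs with h1 h2
    · exact h1.choose_spec.1
    · exact h2.choose_spec
    · exact absurd (TriSets_nonempty ht) h2
  have hdRmem : ∀ t ∈ TriSets D, dR t ∈ t := by
    intro t ht
    rw [hdRdef]
    dsimp only
    split_ifs with h1 h2
    · exact h1.choose_spec.1
    · exact h2.choose_spec
    · exact absurd (TriSets_nonempty ht) h2
  have hqL : ∀ t ∈ TriSets D, ∀ u ∈ TriSets D, u ≠ t → ψ u + 1 = ψ t →
      ∀ g, g ∈ u → g ∈ t → dL t = g := by
    intro t ht u hu hut hψ g hgu hgt
    have h1 : ∃ g, g ∈ t ∧ ∃ u, u ∈ TriSets D ∧ u ≠ t ∧ ψ u + 1 = ψ t ∧ g ∈ u :=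
      ⟨g, hgt, u, hu, hut, hψ, hgu⟩
    have hval : dL t = h1.choose := by rw [hdLdef]; dsimp only; rw [dif_pos h1]
    obtain ⟨hc1, u', hu', hu't, hψ', hcu'⟩ := h1.choose_spec
    have : u' = u := hinj u' hu' u hu (by omega)
    subst this
    rw [hval]
    exact shared_edge_unique hu' ht (fun hh => hu't hh) hcu' hc1 hgu hgt
  have hqR : ∀ t ∈ TriSets D, ∀ u ∈ TriSets D, u ≠ t → ψ t + 1 = ψ u →
      ∀ g, g ∈ u → g ∈ t → dR t = g := by
    intro t ht u hu hut hψ g hgu hgt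
    have h1 : ∃ g, g ∈ t ∧ ∃ u, u ∈ TriSets D ∧ u ≠ t ∧ ψ t + 1 = ψ u ∧ g ∈ u :=
      ⟨g, hgt, u, hu, hut, hψ, hgu⟩
    have hval : dR t = h1.choose := by rw [hdRdef]; dsimp only; rw [dif_pos h1]
    obtain ⟨hc1, u', hu', hu't, hψ', hcu'⟩ := h1.choose_spec
    have : u' = u := hinj u' hu' u hu (by omega)
    subst this
    rw [hval]
    exact shared_edge_unique hu' ht (fun hh => hu't hh) hcu' hc1 hgu hgt
  refine ⟨fun t => if f ∈ t then f else if p < ψ t then dL t else dR t, ?_, ?_, ?_⟩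
  · intro t ht
    dsimp only
    split_ifs with h1 h2
    · exact h1
    · exact hdLmem t ht
    · exact hdRmem t ht
  · intro t ht hf
    dsimp only
    rw [if_pos hf]
  · -- coverage
    have key : ∀ t ∈ TriSets D, ∀ t' ∈ TriSets D, t ≠ t' → ψ t + 1 = ψ t' →
        ∀ g, g ∈ t → g ∈ t' →
        (if f ∈ t then f else if p < ψ t then dL t else dR t) = g ∨
        (if f ∈ t' then f else if p < ψ t' then dL t' else dR t') = g := by
      intro t ht t' ht' hne hψ g hgt hgt'
      by_cases hft : f ∈ t <;> by_cases hft' : f ∈ t'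
      · left
        rw [if_pos hft]
        exact (shared_edge_unique ht ht' hne hgt hgt' hft hft').symm
      · -- f ∈ t only: t' discards leftwards
        right
        have hex : ∃ u, u ∈ TriSets D ∧ f ∈ u := ⟨t, ht, hft⟩
        have hlt : p < ψ t' := by
          rw [hp1 hex]
          obtain ⟨htf, hff⟩ := hex.choose_spec
          by_cases hc : hex.choose = t
          · rw [hc]; omega
          · have hshare : (hex.choose ∩ t).Nonempty :=
              ⟨f, Finset.mem_inter.2 ⟨hff, hft⟩⟩
            rcases hadj _ htf _ ht hc hshare with h | h
            · exfalso
              have : hex.choose = t' := hinj _ htf _ ht' (by omega)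
              rw [this] at hff
              exact hft' hff
            · omega
        rw [if_neg hft', if_pos hlt]
        exact hqL t' ht' t ht hne hψ g hgt hgt'
      · -- f ∈ t' only : t discards rightwards
        left
        have hex : ∃ u, u ∈ TriSets D ∧ f ∈ u := ⟨t', ht', hft'⟩
        have hge : ¬ p < ψ t := by
          rw [hp1 hex]
          obtain ⟨htf, hff⟩ := hex.choose_spec
          by_cases hc : hex.choose = t'
          · rw [hc]; omega
          · have hshare : (hex.choose ∩ t').Nonempty :=
              ⟨f, Finset.mem_inter.2 ⟨hff, hft'⟩⟩
            rcases hadj _ htf _ ht' hc hshare with h | h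
            · omega
            · exfalso
              have : hex.choose = t := hinj _ htf _ ht (by omega)
              rw [this] at hff
              exact hft hff
        rw [if_neg hft, if_neg hge]
        exact hqR t ht t' ht' (Ne.symm hne) hψ g hgt' hgt
      · -- f in neither
        by_cases hlt : p < ψ t'
        · right
          rw [if_neg hft', if_pos hlt]
          exact hqL t' ht' t ht hne hψ g hgt hgt'
        · left
          have hge : ¬ p < ψ t := by omega
          rw [if_neg hft, if_neg hge]
          exact hqR t ht t' ht' (Ne.symm hne) hψ g hgt' hgt
    intro t ht t' ht' hne g hg
    rw [Finset.mem_inter] at hg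
    have hshare : (t ∩ t').Nonempty := ⟨g, Finset.mem_inter.2 hg⟩
    rcases hadj t ht t' ht' hne hshare with h | h
    · rcases key t' ht' t ht (Ne.symm hne) h.symm g hg.2 hg.1 with hh | hh
      · exact Or.inr hh
      · exact Or.inl hh
    · exact key t ht t' ht' hne h.symm g hg.1 hg.2


instance K3plusAdj.decidable (a b : Fin 4) : Decidable (K3plusAdj a b) := by
  unfold K3plusAdj; infer_instance

lemma noK4 : ∀ a b c d : Fin 4, a ≠ b → a ≠ c → a ≠ d → b ≠ c → b ≠ d → c ≠ d →
    K3plusAdj a b → K3plusAdj a c → K3plusAdj a d → K3plusAdj b c → K3plusAdj b d →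
    K3plusAdj c d → False := by decide

lemma triple_ne3 : ∀ a b c : Fin 4, a ≠ b → a ≠ c → b ≠ c → K3plusAdj a b →
    K3plusAdj a c → K3plusAdj b c → a ≠ 3 ∧ b ≠ 3 ∧ c ≠ 3 := by decide

lemma fourth_eq3 : ∀ a b c e : Fin 4, (a ≠ b ∧ a ≠ c ∧ b ≠ c ∧ a ≠ 3 ∧ b ≠ 3 ∧ c ≠ 3 ∧
    e ≠ a ∧ e ≠ b ∧ e ≠ c) → e = 3 := by decide

lemma adj3' : ∀ a : Fin 4, K3plusAdj 3 a → a = 2 := by decide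

lemma adj3'' : ∀ a : Fin 4, K3plusAdj a 3 → a = 2 := by decide

lemma center2 : ∀ a b c d : Fin 4, a ≠ b → a ≠ c → a ≠ d → b ≠ c → b ≠ d → c ≠ d →
    K3plusAdj a b → K3plusAdj a c → K3plusAdj a d → a = 2 := by decide

lemma pigeon4 : ∀ p q r s e : Fin 4, p ≠ q → p ≠ r → p ≠ s → q ≠ r → q ≠ s → r ≠ s →
    e = p ∨ e = q ∨ e = r ∨ e = s := by decide

lemma adj_cases : ∀ a b : Fin 4, K3plusAdj a b →
    (a = 0 ∧ b = 1) ∨ (a = 1 ∧ b = 0) ∨ (a = 0 ∧ b = 2) ∨ (a = 2 ∧ b = 0) ∨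
    (a = 1 ∧ b = 2) ∨ (a = 2 ∧ b = 1) ∨ (a = 2 ∧ b = 3) ∨ (a = 3 ∧ b = 2) := by decide

set_option maxRecDepth 10000 in
lemma k3_path_embed : ∀ b01 b02 b12 b23 : Bool,
    ¬(b01 = true ∧ b02 = true ∧ b12 = true) → ¬(b02 = true ∧ b12 = true ∧ b23 = true) →
    ∃ π : Fin 4 → Fin 6, (∀ i j : Fin 4, π i = π j → i = j) ∧
      (b01 = true → ((π 0).val + 1 = (π 1).val ∨ (π 1).val + 1 = (π 0).val)) ∧
      (b02 = true → ((π 0).val + 1 = (π 2).val ∨ (π 2).val + 1 = (π 0).val)) ∧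
      (b12 = true → ((π 1).val + 1 = (π 2).val ∨ (π 2).val + 1 = (π 1).val)) ∧
      (b23 = true → ((π 2).val + 1 = (π 3).val ∨ (π 3).val + 1 = (π 2).val)) := by
  intro b01 b02 b12 b23
  cases b01 <;> cases b02 <;> cases b12 <;> cases b23 <;> decide


set_option maxHeartbeats 1000000 in
lemma exists_discard_k3plus {D : Finset (Sym2 V)} (f : Sym2 V)
    (φ : TriSets D → Fin 4) (hφinj : Function.Injective φ)
    (hφadj : ∀ t t' : TriSets D, t ≠ t' →
      ((t : Finset (Sym2 V)) ∩ (t' : Finset (Sym2 V))).Nonempty → K3plusAdj (φ t) (φ t')) :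
    ∃ d : Finset (Sym2 V) → Sym2 V,
      (∀ t ∈ TriSets D, d t ∈ t) ∧ (∀ t ∈ TriSets D, f ∈ t → d t = f) ∧
      (∀ t ∈ TriSets D, ∀ t' ∈ TriSets D, t ≠ t' → ∀ g ∈ t ∩ t', d t = g ∨ d t' = g) := by
  classical
  have hsub_ne : ∀ a b : TriSets D, a ≠ b → (a : Finset (Sym2 V)) ≠ (b : Finset (Sym2 V)) :=
    fun a b hab hh => hab (Subtype.ext hh)
  have uniq : ∀ a b : TriSets D, a ≠ b → ∀ e e' : Sym2 V,
      e ∈ (a : Finset (Sym2 V)) → e ∈ (b : Finset (Sym2 V)) →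
      e' ∈ (a : Finset (Sym2 V)) → e' ∈ (b : Finset (Sym2 V)) → e = e' :=
    fun a b hab e e' h1 h2 h3 h4 => shared_edge_unique a.2 b.2 (hsub_ne a b hab) h1 h2 h3 h4
  have bookEdge : ∀ t₀ t₁ t₂ : TriSets D, t₀ ≠ t₁ → t₀ ≠ t₂ → t₁ ≠ t₂ →
      ((t₀ : Finset (Sym2 V)) ∩ (t₁ : Finset (Sym2 V))).Nonempty →
      ((t₀ : Finset (Sym2 V)) ∩ (t₂ : Finset (Sym2 V))).Nonempty →
      ((t₁ : Finset (Sym2 V)) ∩ (t₂ : Finset (Sym2 V))).Nonempty →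
      ∃ g, g ∈ (t₀ : Finset (Sym2 V)) ∧ g ∈ (t₁ : Finset (Sym2 V)) ∧
        g ∈ (t₂ : Finset (Sym2 V)) := by
    intro t₀ t₁ t₂ h01 h02 h12 s01 s02 s12
    rcases book_or_K4 t₀.2 t₁.2 t₂.2 (hsub_ne _ _ h01) (hsub_ne _ _ h02) (hsub_ne _ _ h12)
        s01 s02 s12 with hg | ⟨t₃, ht₃, hn0, hn1, hn2, i0, i1, i2⟩
    · exact hg
    · exfalso
      have hu0 : (⟨t₃, ht₃⟩ : TriSets D) ≠ t₀ := fun hh => hn0 (congrArg Subtype.val hh)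
      have hu1 : (⟨t₃, ht₃⟩ : TriSets D) ≠ t₁ := fun hh => hn1 (congrArg Subtype.val hh)
      have hu2 : (⟨t₃, ht₃⟩ : TriSets D) ≠ t₂ := fun hh => hn2 (congrArg Subtype.val hh)
      exact noK4 (φ ⟨t₃, ht₃⟩) (φ t₀) (φ t₁) (φ t₂)
        (hφinj.ne hu0) (hφinj.ne hu1) (hφinj.ne hu2)
        (hφinj.ne h01) (hφinj.ne h02) (hφinj.ne h12)
        (hφadj _ _ hu0 i0) (hφadj _ _ hu1 i1) (hφadj _ _ hu2 i2)
        (hφadj _ _ h01 s01) (hφadj _ _ h02 s02) (hφadj _ _ h12 s12)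
  have fnbr_eq : ∀ t t' u₂ : TriSets D, t ≠ t' → f ∈ (t : Finset (Sym2 V)) →
      f ∉ (t' : Finset (Sym2 V)) → ∀ g, g ∈ (t : Finset (Sym2 V)) →
      g ∈ (t' : Finset (Sym2 V)) → u₂ ≠ t' →
      ((t' : Finset (Sym2 V)) ∩ (u₂ : Finset (Sym2 V))).Nonempty →
      f ∈ (u₂ : Finset (Sym2 V)) → u₂ = t := by
    intro t t' u₂ hne hft hft' g hgt hgt' hu₂ hi₂ hfu₂
    by_contra hc
    have htu₂ : t ≠ u₂ := fun hh => hc hh.symm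
    obtain ⟨e, he0, he1, he2⟩ := bookEdge t t' u₂ hne htu₂ (Ne.symm hu₂)
      ⟨g, Finset.mem_inter.2 ⟨hgt, hgt'⟩⟩ ⟨f, Finset.mem_inter.2 ⟨hft, hfu₂⟩⟩ hi₂
    have heg : e = g := uniq t t' hne e g he0 he1 hgt hgt'
    have hef : e = f := uniq t u₂ htu₂ e f he0 he2 hft hfu₂
    have hfg : f = g := hef.symm.trans heg
    exact hft' (hfg ▸ hgt')
  by_cases HBook : ∃ t₀ t₁ t₂ : TriSets D, t₀ ≠ t₁ ∧ t₀ ≠ t₂ ∧ t₁ ≠ t₂ ∧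
      ((t₀ : Finset (Sym2 V)) ∩ (t₁ : Finset (Sym2 V))).Nonempty ∧
      ((t₀ : Finset (Sym2 V)) ∩ (t₂ : Finset (Sym2 V))).Nonempty ∧
      ((t₁ : Finset (Sym2 V)) ∩ (t₂ : Finset (Sym2 V))).Nonempty
  · -- Case A : a book of three triangles
    obtain ⟨t₀, t₁, t₂, h01, h02, h12, s01, s02, s12⟩ := HBook
    obtain ⟨gB, hgB0, hgB1, hgB2⟩ := bookEdge t₀ t₁ t₂ h01 h02 h12 s01 s02 s12
    obtain ⟨hp0, hp1, hp2⟩ := triple_ne3 (φ t₀) (φ t₁) (φ t₂) (hφinj.ne h01) (hφinj.ne h02)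
      (hφinj.ne h12) (hφadj _ _ h01 s01) (hφadj _ _ h02 s02) (hφadj _ _ h12 s12)
    have hpos3 : ∀ u : TriSets D, u ≠ t₀ → u ≠ t₁ → u ≠ t₂ → φ u = 3 := fun u h0 h1 h2 =>
      fourth_eq3 (φ t₀) (φ t₁) (φ t₂) (φ u) ⟨hφinj.ne h01, hφinj.ne h02, hφinj.ne h12,
        hp0, hp1, hp2, hφinj.ne h0, hφinj.ne h1, hφinj.ne h2⟩
    have hgBmem : ∀ t : TriSets D, t = t₀ ∨ t = t₁ ∨ t = t₂ →
        gB ∈ (t : Finset (Sym2 V)) := by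
      rintro t (rfl | rfl | rfl) <;> assumption
    set d₀ : TriSets D → Sym2 V := fun t =>
      if f ∈ (t : Finset (Sym2 V)) then f
      else if h1 : ∃ u : TriSets D, u ≠ t ∧
          ((t : Finset (Sym2 V)) ∩ (u : Finset (Sym2 V))).Nonempty ∧
          f ∈ (u : Finset (Sym2 V)) then h1.choose_spec.2.1.choose
      else if t = t₀ ∨ t = t₁ ∨ t = t₂ then gB
      else if h2 : ∃ u : TriSets D, u ≠ t ∧
          ((t : Finset (Sym2 V)) ∩ (u : Finset (Sym2 V))).Nonempty then
        h2.choose_spec.2.choose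
      else if hne : (t : Finset (Sym2 V)).Nonempty then hne.choose else f
      with hd₀
    have hd₀mem : ∀ t : TriSets D, d₀ t ∈ (t : Finset (Sym2 V)) := by
      intro t
      rw [hd₀]
      dsimp only
      split_ifs with hf h1 hb h2 hne
      · exact hf
      · exact (Finset.mem_inter.1 h1.choose_spec.2.1.choose_spec).1
      · exact hgBmem t hb
      · exact (Finset.mem_inter.1 h2.choose_spec.2.choose_spec).1
      · exact hne.choose_spec
      · exact absurd (TriSets_nonempty t.2) hne
    have cover : ∀ t t' : TriSets D, t ≠ t' → ∀ g, g ∈ (t : Finset (Sym2 V)) →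
        g ∈ (t' : Finset (Sym2 V)) → d₀ t = g ∨ d₀ t' = g := by
      intro t t' hne g hgt hgt'
      by_cases hft : f ∈ (t : Finset (Sym2 V)) <;>
        by_cases hft' : f ∈ (t' : Finset (Sym2 V))
      · left
        have hgf : g = f := uniq t t' hne g f hgt hgt' hft hft'
        rw [hd₀]; dsimp only; rw [if_pos hft, hgf]
      · -- f ∈ t only
        right
        have H1 : ∃ u : TriSets D, u ≠ t' ∧
            ((t' : Finset (Sym2 V)) ∩ (u : Finset (Sym2 V))).Nonempty ∧
            f ∈ (u : Finset (Sym2 V)) :=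
          ⟨t, hne, ⟨g, Finset.mem_inter.2 ⟨hgt', hgt⟩⟩, hft⟩
        rw [hd₀]; dsimp only; rw [if_neg hft', dif_pos H1]
        have hu₂t : H1.choose = t := fnbr_eq t t' H1.choose hne hft hft' g hgt hgt'
          H1.choose_spec.1 H1.choose_spec.2.1 H1.choose_spec.2.2
        have hv := H1.choose_spec.2.1.choose_spec
        rw [Finset.mem_inter] at hv
        exact uniq t' t (Ne.symm hne) _ g hv.1 (hu₂t ▸ hv.2) hgt' hgt
      · -- f ∈ t' only
        left
        have H1 : ∃ u : TriSets D, u ≠ t ∧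
            ((t : Finset (Sym2 V)) ∩ (u : Finset (Sym2 V))).Nonempty ∧
            f ∈ (u : Finset (Sym2 V)) :=
          ⟨t', Ne.symm hne, ⟨g, Finset.mem_inter.2 ⟨hgt, hgt'⟩⟩, hft'⟩
        rw [hd₀]; dsimp only; rw [if_neg hft, dif_pos H1]
        have hu₂t : H1.choose = t' := fnbr_eq t' t H1.choose (Ne.symm hne) hft' hft g hgt' hgt
          H1.choose_spec.1 H1.choose_spec.2.1 H1.choose_spec.2.2
        have hv := H1.choose_spec.2.1.choose_spec
        rw [Finset.mem_inter] at hv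
        exact uniq t t' hne _ g hv.1 (hu₂t ▸ hv.2) hgt hgt'
      · -- f in neither
        by_cases hb : t = t₀ ∨ t = t₁ ∨ t = t₂ <;>
          by_cases hb' : t' = t₀ ∨ t' = t₁ ∨ t' = t₂
        · -- both book members
          have hggB : g = gB := uniq t t' hne g gB hgt hgt' (hgBmem t hb) (hgBmem t' hb')
          by_cases H1t : ∃ u : TriSets D, u ≠ t ∧
              ((t : Finset (Sym2 V)) ∩ (u : Finset (Sym2 V))).Nonempty ∧
              f ∈ (u : Finset (Sym2 V))
          · have hspec := H1t.choose_spec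
            by_cases hbu : H1t.choose = t₀ ∨ H1t.choose = t₁ ∨ H1t.choose = t₂
            · left
              rw [hd₀]; dsimp only; rw [if_neg hft, dif_pos H1t]
              have hv := H1t.choose_spec.2.1.choose_spec
              rw [Finset.mem_inter] at hv
              have hvgB := uniq t H1t.choose (Ne.symm hspec.1) _ gB hv.1 hv.2
                (hgBmem t hb) (hgBmem _ hbu)
              rw [hvgB, hggB]
            · -- the f-triangle is the pendant
              right
              have hφu₁ : φ H1t.choose = 3 := by
                push_neg at hbu
                exact hpos3 _ hbu.1 hbu.2.1 hbu.2.2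
              have hφt : φ t = 2 := by
                have hi : ((H1t.choose : Finset (Sym2 V)) ∩ (t : Finset (Sym2 V))).Nonempty := by
                  rw [Finset.inter_comm]; exact hspec.2.1
                have := hφadj H1t.choose t hspec.1 hi
                rw [hφu₁] at this
                exact adj3' _ this
              have H1t' : ¬ ∃ u : TriSets D, u ≠ t' ∧
                  ((t' : Finset (Sym2 V)) ∩ (u : Finset (Sym2 V))).Nonempty ∧
                  f ∈ (u : Finset (Sym2 V)) := by
                rintro ⟨u', hu'ne, hu'i, hfu'⟩
                by_cases hbu' : u' = t₀ ∨ u' = t₁ ∨ u' = t₂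
                · have hne' : H1t.choose ≠ u' := by
                    intro hh
                    rw [hh] at hbu
                    exact hbu hbu'
                  have hsh : ((H1t.choose : Finset (Sym2 V)) ∩ (u' : Finset (Sym2 V))).Nonempty :=
                    ⟨f, Finset.mem_inter.2 ⟨hspec.2.2, hfu'⟩⟩
                  have hadj' := hφadj H1t.choose u' hne' hsh
                  rw [hφu₁] at hadj'
                  have hφu' : φ u' = 2 := adj3' _ hadj'
                  have : u' = t := hφinj (hφu'.trans hφt.symm)
                  rw [this] at hfu'
                  exact hft hfu'
                · push_neg at hbu'
                  have hφu' : φ u' = 3 := hpos3 _ hbu'.1 hbu'.2.1 hbu'.2.2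
                  have huu : u' = H1t.choose := hφinj (hφu'.trans hφu₁.symm)
                  have hi' : ((u' : Finset (Sym2 V)) ∩ (t' : Finset (Sym2 V))).Nonempty := by
                    rw [Finset.inter_comm]; exact hu'i
                  have hadj' := hφadj u' t' hu'ne hi'
                  rw [hφu'] at hadj'
                  have hφt' : φ t' = 2 := adj3' _ hadj'
                  exact hne (hφinj (hφt.trans hφt'.symm))
              rw [hd₀]; dsimp only; rw [if_neg hft', dif_neg H1t', if_pos hb', hggB]
          · left
            rw [hd₀]; dsimp only; rw [if_neg hft, dif_neg H1t, if_pos hb, hggB]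
        · -- t book, t' pendant
          right
          push_neg at hb'
          have hφt' : φ t' = 3 := hpos3 _ hb'.1 hb'.2.1 hb'.2.2
          have hφt : φ t = 2 := by
            have hi : ((t' : Finset (Sym2 V)) ∩ (t : Finset (Sym2 V))).Nonempty :=
              ⟨g, Finset.mem_inter.2 ⟨hgt', hgt⟩⟩
            have hadj0 := hφadj t' t (fun hh => hne hh.symm) hi
            rw [hφt'] at hadj0
            exact adj3' _ hadj0
          have H1t' : ¬ ∃ u : TriSets D, u ≠ t' ∧
              ((t' : Finset (Sym2 V)) ∩ (u : Finset (Sym2 V))).Nonempty ∧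
              f ∈ (u : Finset (Sym2 V)) := by
            rintro ⟨u', hu'ne, hu'i, hfu'⟩
            have hadj' := hφadj t' u' (fun hh => hu'ne hh.symm) hu'i
            rw [hφt'] at hadj'
            have hφu' : φ u' = 2 := adj3' _ hadj'
            have : u' = t := hφinj (hφu'.trans hφt.symm)
            rw [this] at hfu'
            exact hft hfu'
          have hbne' : ¬ (t' = t₀ ∨ t' = t₁ ∨ t' = t₂) := by
            push_neg; exact hb'
          have H2t' : ∃ u : TriSets D, u ≠ t' ∧
              ((t' : Finset (Sym2 V)) ∩ (u : Finset (Sym2 V))).Nonempty :=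
            ⟨t, hne, ⟨g, Finset.mem_inter.2 ⟨hgt', hgt⟩⟩⟩
          rw [hd₀]; dsimp only; rw [if_neg hft', dif_neg H1t', if_neg hbne', dif_pos H2t']
          have hu₃ := H2t'.choose_spec
          have hadj' := hφadj t' H2t'.choose (fun hh => hu₃.1 hh.symm) hu₃.2
          rw [hφt'] at hadj'
          have hφu₃ : φ H2t'.choose = 2 := adj3' _ hadj'
          have hu₃t : H2t'.choose = t := hφinj (hφu₃.trans hφt.symm)
          have hv := H2t'.choose_spec.2.choose_spec
          rw [Finset.mem_inter] at hv
          exact uniq t' t (Ne.symm hne) _ g hv.1 (hu₃t ▸ hv.2) hgt' hgt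
        · -- t pendant, t' book
          left
          push_neg at hb
          have hφt : φ t = 3 := hpos3 _ hb.1 hb.2.1 hb.2.2
          have hφt' : φ t' = 2 := by
            have hi : ((t : Finset (Sym2 V)) ∩ (t' : Finset (Sym2 V))).Nonempty :=
              ⟨g, Finset.mem_inter.2 ⟨hgt, hgt'⟩⟩
            have hadj0 := hφadj t t' hne hi
            rw [hφt] at hadj0
            exact adj3' _ hadj0
          have H1t : ¬ ∃ u : TriSets D, u ≠ t ∧
              ((t : Finset (Sym2 V)) ∩ (u : Finset (Sym2 V))).Nonempty ∧
              f ∈ (u : Finset (Sym2 V)) := by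
            rintro ⟨u', hu'ne, hu'i, hfu'⟩
            have hadj' := hφadj t u' (fun hh => hu'ne hh.symm) hu'i
            rw [hφt] at hadj'
            have hφu' : φ u' = 2 := adj3' _ hadj'
            have : u' = t' := hφinj (hφu'.trans hφt'.symm)
            rw [this] at hfu'
            exact hft' hfu'
          have hbne : ¬ (t = t₀ ∨ t = t₁ ∨ t = t₂) := by
            push_neg; exact hb
          have H2t : ∃ u : TriSets D, u ≠ t ∧
              ((t : Finset (Sym2 V)) ∩ (u : Finset (Sym2 V))).Nonempty :=
            ⟨t', Ne.symm hne, ⟨g, Finset.mem_inter.2 ⟨hgt, hgt'⟩⟩⟩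
          rw [hd₀]; dsimp only; rw [if_neg hft, dif_neg H1t, if_neg hbne, dif_pos H2t]
          have hu₃ := H2t.choose_spec
          have hadj' := hφadj t H2t.choose (fun hh => hu₃.1 hh.symm) hu₃.2
          rw [hφt] at hadj'
          have hφu₃ : φ H2t.choose = 2 := adj3' _ hadj'
          have hu₃t : H2t.choose = t' := hφinj (hφu₃.trans hφt'.symm)
          have hv := H2t.choose_spec.2.choose_spec
          rw [Finset.mem_inter] at hv
          exact uniq t t' hne _ g hv.1 (hu₃t ▸ hv.2) hgt hgt'
        · -- both pendant : impossible
          push_neg at hb hb'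
          have hφt : φ t = 3 := hpos3 _ hb.1 hb.2.1 hb.2.2
          have hφt' : φ t' = 3 := hpos3 _ hb'.1 hb'.2.1 hb'.2.2
          exact absurd (hφinj (hφt.trans hφt'.symm)) hne
    refine ⟨fun u => if h : u ∈ TriSets D then d₀ ⟨u, h⟩ else f, ?_, ?_, ?_⟩
    · intro t ht
      dsimp only
      rw [dif_pos ht]
      exact hd₀mem ⟨t, ht⟩
    · intro t ht hf
      dsimp only
      rw [dif_pos ht, hd₀]
      dsimp only
      rw [if_pos hf]
    · intro t ht t' ht' hnet g hg
      rw [Finset.mem_inter] at hg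
      have := cover ⟨t, ht⟩ ⟨t', ht'⟩ (fun hh => hnet (congrArg Subtype.val hh)) g hg.1 hg.2
      dsimp only
      rw [dif_pos ht, dif_pos ht']
      exact this
  · -- no book
    by_cases HStar : ∃ c u₁ u₂ u₃ : TriSets D, c ≠ u₁ ∧ c ≠ u₂ ∧ c ≠ u₃ ∧ u₁ ≠ u₂ ∧
        u₁ ≠ u₃ ∧ u₂ ≠ u₃ ∧ ((c : Finset (Sym2 V)) ∩ (u₁ : Finset (Sym2 V))).Nonempty ∧
        ((c : Finset (Sym2 V)) ∩ (u₂ : Finset (Sym2 V))).Nonempty ∧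
        ((c : Finset (Sym2 V)) ∩ (u₃ : Finset (Sym2 V))).Nonempty
    · -- Case B1 : a star
      obtain ⟨c, u₁, u₂, u₃, hc1, hc2, hc3, h12, h13, h23, s1, s2, s3⟩ := HStar
      have hleaf : ∀ v : TriSets D, v = c ∨ v = u₁ ∨ v = u₂ ∨ v = u₃ := by
        intro v
        rcases pigeon4 (φ c) (φ u₁) (φ u₂) (φ u₃) (φ v) (hφinj.ne hc1) (hφinj.ne hc2)
          (hφinj.ne hc3) (hφinj.ne h12) (hφinj.ne h13) (hφinj.ne h23) with h | h | h | h
        · exact Or.inl (hφinj h)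
        · exact Or.inr (Or.inl (hφinj h))
        · exact Or.inr (Or.inr (Or.inl (hφinj h)))
        · exact Or.inr (Or.inr (Or.inr (hφinj h)))
      have hshare_c : ∀ a b : TriSets D, a ≠ b →
          ((a : Finset (Sym2 V)) ∩ (b : Finset (Sym2 V))).Nonempty → a = c ∨ b = c := by
        intro a b hab hi
        by_contra hcc
        push_neg at hcc
        have hsa : ((c : Finset (Sym2 V)) ∩ (a : Finset (Sym2 V))).Nonempty := by
          rcases hleaf a with h | h | h | h
          · exact absurd h hcc.1
          all_goals rw [h]
          exacts [s1, s2, s3]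
        have hsb : ((c : Finset (Sym2 V)) ∩ (b : Finset (Sym2 V))).Nonempty := by
          rcases hleaf b with h | h | h | h
          · exact absurd h hcc.2
          all_goals rw [h]
          exacts [s1, s2, s3]
        exact HBook ⟨c, a, b, fun hh => hcc.1 hh.symm, fun hh => hcc.2 hh.symm, hab,
          hsa, hsb, hi⟩
      set d₀ : TriSets D → Sym2 V := fun t =>
        if f ∈ (t : Finset (Sym2 V)) then f
        else if h1 : ∃ u : TriSets D, u ≠ t ∧
            ((t : Finset (Sym2 V)) ∩ (u : Finset (Sym2 V))).Nonempty ∧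
            f ∈ (u : Finset (Sym2 V)) then h1.choose_spec.2.1.choose
        else if h2 : ∃ u : TriSets D, u ≠ t ∧
            ((t : Finset (Sym2 V)) ∩ (u : Finset (Sym2 V))).Nonempty then
          h2.choose_spec.2.choose
        else if hne : (t : Finset (Sym2 V)).Nonempty then hne.choose else f
        with hd₀
      have hd₀mem : ∀ t : TriSets D, d₀ t ∈ (t : Finset (Sym2 V)) := by
        intro t
        rw [hd₀]
        dsimp only
        split_ifs with hf h1 h2 hne
        · exact hf
        · exact (Finset.mem_inter.1 h1.choose_spec.2.1.choose_spec).1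
        · exact (Finset.mem_inter.1 h2.choose_spec.2.choose_spec).1
        · exact hne.choose_spec
        · exact absurd (TriSets_nonempty t.2) hne
      have cover : ∀ t t' : TriSets D, t ≠ t' → ∀ g, g ∈ (t : Finset (Sym2 V)) →
          g ∈ (t' : Finset (Sym2 V)) → d₀ t = g ∨ d₀ t' = g := by
        intro t t' hne g hgt hgt'
        by_cases hft : f ∈ (t : Finset (Sym2 V)) <;>
          by_cases hft' : f ∈ (t' : Finset (Sym2 V))
        · left
          have hgf : g = f := uniq t t' hne g f hgt hgt' hft hft'
          rw [hd₀]; dsimp only; rw [if_pos hft, hgf]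
        · right
          have H1 : ∃ u : TriSets D, u ≠ t' ∧
              ((t' : Finset (Sym2 V)) ∩ (u : Finset (Sym2 V))).Nonempty ∧
              f ∈ (u : Finset (Sym2 V)) :=
            ⟨t, hne, ⟨g, Finset.mem_inter.2 ⟨hgt', hgt⟩⟩, hft⟩
          rw [hd₀]; dsimp only; rw [if_neg hft', dif_pos H1]
          have hu₂t : H1.choose = t := fnbr_eq t t' H1.choose hne hft hft' g hgt hgt'
            H1.choose_spec.1 H1.choose_spec.2.1 H1.choose_spec.2.2
          have hv := H1.choose_spec.2.1.choose_spec
          rw [Finset.mem_inter] at hv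
          exact uniq t' t (Ne.symm hne) _ g hv.1 (hu₂t ▸ hv.2) hgt' hgt
        · left
          have H1 : ∃ u : TriSets D, u ≠ t ∧
              ((t : Finset (Sym2 V)) ∩ (u : Finset (Sym2 V))).Nonempty ∧
              f ∈ (u : Finset (Sym2 V)) :=
            ⟨t', Ne.symm hne, ⟨g, Finset.mem_inter.2 ⟨hgt, hgt'⟩⟩, hft'⟩
          rw [hd₀]; dsimp only; rw [if_neg hft, dif_pos H1]
          have hu₂t : H1.choose = t' := fnbr_eq t' t H1.choose (Ne.symm hne) hft' hft g hgt' hgt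
            H1.choose_spec.1 H1.choose_spec.2.1 H1.choose_spec.2.2
          have hv := H1.choose_spec.2.1.choose_spec
          rw [Finset.mem_inter] at hv
          exact uniq t t' hne _ g hv.1 (hu₂t ▸ hv.2) hgt hgt'
        · -- f in neither; one of t, t' is the centre
          rcases hshare_c t t' hne ⟨g, Finset.mem_inter.2 ⟨hgt, hgt'⟩⟩ with htc | htc
          · -- t = c : t' is a leaf
            right
            have H1t' : ¬ ∃ u : TriSets D, u ≠ t' ∧
                ((t' : Finset (Sym2 V)) ∩ (u : Finset (Sym2 V))).Nonempty ∧
                f ∈ (u : Finset (Sym2 V)) := by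
              rintro ⟨u', hu'ne, hu'i, hfu'⟩
              rcases hshare_c t' u' (fun hh => hu'ne hh.symm) hu'i with hh | hh
              · rw [← htc] at hh
                exact hne hh.symm
              · rw [hh, ← htc] at hfu'
                exact hft hfu'
            have H2t' : ∃ u : TriSets D, u ≠ t' ∧
                ((t' : Finset (Sym2 V)) ∩ (u : Finset (Sym2 V))).Nonempty :=
              ⟨t, hne, ⟨g, Finset.mem_inter.2 ⟨hgt', hgt⟩⟩⟩
            rw [hd₀]; dsimp only; rw [if_neg hft', dif_neg H1t', dif_pos H2t']
            have hu₃ := H2t'.choose_spec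
            have hu₃t : H2t'.choose = t := by
              rcases hshare_c t' H2t'.choose (fun hh => hu₃.1 hh.symm) hu₃.2 with hh | hh
              · rw [← htc] at hh
                exact absurd hh.symm hne
              · rw [hh, htc]
            have hv := H2t'.choose_spec.2.choose_spec
            rw [Finset.mem_inter] at hv
            exact uniq t' t (Ne.symm hne) _ g hv.1 (hu₃t ▸ hv.2) hgt' hgt
          · -- t' = c : t is a leaf
            left
            have H1t : ¬ ∃ u : TriSets D, u ≠ t ∧
                ((t : Finset (Sym2 V)) ∩ (u : Finset (Sym2 V))).Nonempty ∧
                f ∈ (u : Finset (Sym2 V)) := by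
              rintro ⟨u', hu'ne, hu'i, hfu'⟩
              rcases hshare_c t u' (fun hh => hu'ne hh.symm) hu'i with hh | hh
              · rw [← htc] at hh
                exact hne hh
              · rw [hh, ← htc] at hfu'
                exact hft' hfu'
            have H2t : ∃ u : TriSets D, u ≠ t ∧
                ((t : Finset (Sym2 V)) ∩ (u : Finset (Sym2 V))).Nonempty :=
              ⟨t', Ne.symm hne, ⟨g, Finset.mem_inter.2 ⟨hgt, hgt'⟩⟩⟩
            rw [hd₀]; dsimp only; rw [if_neg hft, dif_neg H1t, dif_pos H2t]
            have hu₃ := H2t.choose_spec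
            have hu₃t : H2t.choose = t' := by
              rcases hshare_c t H2t.choose (fun hh => hu₃.1 hh.symm) hu₃.2 with hh | hh
              · rw [← htc] at hh
                exact absurd hh hne
              · rw [hh, htc]
            have hv := H2t.choose_spec.2.choose_spec
            rw [Finset.mem_inter] at hv
            exact uniq t t' hne _ g hv.1 (hu₃t ▸ hv.2) hgt hgt'
      refine ⟨fun u => if h : u ∈ TriSets D then d₀ ⟨u, h⟩ else f, ?_, ?_, ?_⟩
      · intro t ht
        dsimp only
        rw [dif_pos ht]
        exact hd₀mem ⟨t, ht⟩
      · intro t ht hf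
        dsimp only
        rw [dif_pos ht, hd₀]
        dsimp only
        rw [if_pos hf]
      · intro t ht t' ht' hnet g hg
        rw [Finset.mem_inter] at hg
        have := cover ⟨t, ht⟩ ⟨t', ht'⟩ (fun hh => hnet (congrArg Subtype.val hh)) g hg.1 hg.2
        dsimp only
        rw [dif_pos ht, dif_pos ht']
        exact this
    · -- Case B2 : no book and no star : path-like, re-embed into a path
      set P01 : Prop := ∃ a b : TriSets D, a ≠ b ∧
        ((a : Finset (Sym2 V)) ∩ (b : Finset (Sym2 V))).Nonempty ∧ φ a = 0 ∧ φ b = 1 with hP01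
      set P02 : Prop := ∃ a b : TriSets D, a ≠ b ∧
        ((a : Finset (Sym2 V)) ∩ (b : Finset (Sym2 V))).Nonempty ∧ φ a = 0 ∧ φ b = 2 with hP02
      set P12 : Prop := ∃ a b : TriSets D, a ≠ b ∧
        ((a : Finset (Sym2 V)) ∩ (b : Finset (Sym2 V))).Nonempty ∧ φ a = 1 ∧ φ b = 2 with hP12
      set P23 : Prop := ∃ a b : TriSets D, a ≠ b ∧
        ((a : Finset (Sym2 V)) ∩ (b : Finset (Sym2 V))).Nonempty ∧ φ a = 2 ∧ φ b = 3 with hP23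
      have hnb1 : ¬ (P01 ∧ P02 ∧ P12) := by
        rintro ⟨⟨a, b, hab, hiab, ha0, hb1⟩, ⟨a', cc, hac, hiac, ha'0, hc2⟩,
          ⟨b', c', hbc, hibc, hb'1, hc'2⟩⟩
        have e1 : a' = a := hφinj (ha'0.trans ha0.symm)
        have e2 : b' = b := hφinj (hb'1.trans hb1.symm)
        have e3 : c' = cc := hφinj (hc'2.trans hc2.symm)
        rw [e1] at hiac hac
        rw [e2, e3] at hibc hbc
        exact HBook ⟨a, b, cc, hab, hac, hbc, hiab, hiac, hibc⟩
      have hnb2 : ¬ (P02 ∧ P12 ∧ P23) := by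
        rintro ⟨⟨a, cc, hac, hiac, ha0, hc2⟩, ⟨b, c', hbc, hibc, hb1, hc'2⟩,
          ⟨c'', w, hcw, hicw, hc''2, hw3⟩⟩
        have e1 : c' = cc := hφinj (hc'2.trans hc2.symm)
        have e2 : c'' = cc := hφinj (hc''2.trans hc2.symm)
        rw [e1] at hibc hbc
        rw [e2] at hicw hcw
        have hab : a ≠ b := fun hh => by
          rw [hh] at ha0
          rw [ha0] at hb1
          exact absurd hb1 (by decide)
        have haw : a ≠ w := fun hh => by
          rw [hh] at ha0
          rw [ha0] at hw3
          exact absurd hw3 (by decide)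
        have hbw : b ≠ w := fun hh => by
          rw [hh] at hb1
          rw [hb1] at hw3
          exact absurd hw3 (by decide)
        exact HStar ⟨cc, a, b, w, Ne.symm hac, Ne.symm hbc, hcw, hab, haw, hbw,
          (by rw [Finset.inter_comm]; exact hiac), (by rw [Finset.inter_comm]; exact hibc),
          hicw⟩
      obtain ⟨π, hπinj, hr01, hr02, hr12, hr23⟩ := k3_path_embed
        (decide P01) (decide P02) (decide P12) (decide P23)
        (fun hh => hnb1 ⟨of_decide_eq_true hh.1, of_decide_eq_true hh.2.1,
          of_decide_eq_true hh.2.2⟩)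
        (fun hh => hnb2 ⟨of_decide_eq_true hh.1, of_decide_eq_true hh.2.1,
          of_decide_eq_true hh.2.2⟩)
      apply exists_discard_core f (fun u => if h : u ∈ TriSets D then (π (φ ⟨u, h⟩)).val else 0)
      · intro t ht t' ht' hψ
        rw [dif_pos ht, dif_pos ht'] at hψ
        have h1 : π (φ ⟨t, ht⟩) = π (φ ⟨t', ht'⟩) := Fin.ext hψ
        have h2 : φ ⟨t, ht⟩ = φ ⟨t', ht'⟩ := hπinj _ _ h1
        exact congrArg Subtype.val (hφinj h2)
      · intro t ht t' ht' hne hi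
        have hnes : (⟨t, ht⟩ : TriSets D) ≠ ⟨t', ht'⟩ := fun hh => hne (congrArg Subtype.val hh)
        have hadj := hφadj ⟨t, ht⟩ ⟨t', ht'⟩ hnes hi
        have hi' : ((⟨t', ht'⟩ : TriSets D) : Finset (Sym2 V)) ∩
            ((⟨t, ht⟩ : TriSets D) : Finset (Sym2 V)) |>.Nonempty := by
          rw [Finset.inter_comm]; exact hi
        rw [dif_pos ht, dif_pos ht']
        rcases adj_cases _ _ hadj with ⟨ha, hb⟩ | ⟨ha, hb⟩ | ⟨ha, hb⟩ | ⟨ha, hb⟩ |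
          ⟨ha, hb⟩ | ⟨ha, hb⟩ | ⟨ha, hb⟩ | ⟨ha, hb⟩
        · have hp : P01 := ⟨⟨t, ht⟩, ⟨t', ht'⟩, hnes, hi, ha, hb⟩
          have := hr01 (decide_eq_true hp)
          rw [ha, hb]
          omega
        · have hp : P01 := ⟨⟨t', ht'⟩, ⟨t, ht⟩, Ne.symm hnes, hi', hb, ha⟩
          have := hr01 (decide_eq_true hp)
          rw [ha, hb]
          omega
        · have hp : P02 := ⟨⟨t, ht⟩, ⟨t', ht'⟩, hnes, hi, ha, hb⟩
          have := hr02 (decide_eq_true hp)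
          rw [ha, hb]
          omega
        · have hp : P02 := ⟨⟨t', ht'⟩, ⟨t, ht⟩, Ne.symm hnes, hi', hb, ha⟩
          have := hr02 (decide_eq_true hp)
          rw [ha, hb]
          omega
        · have hp : P12 := ⟨⟨t, ht⟩, ⟨t', ht'⟩, hnes, hi, ha, hb⟩
          have := hr12 (decide_eq_true hp)
          rw [ha, hb]
          omega
        · have hp : P12 := ⟨⟨t', ht'⟩, ⟨t, ht⟩, Ne.symm hnes, hi', hb, ha⟩
          have := hr12 (decide_eq_true hp)
          rw [ha, hb]
          omega
        · have hp : P23 := ⟨⟨t, ht⟩, ⟨t', ht'⟩, hnes, hi, ha, hb⟩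
          have := hr23 (decide_eq_true hp)
          rw [ha, hb]
          omega
        · have hp : P23 := ⟨⟨t', ht'⟩, ⟨t, ht⟩, Ne.symm hnes, hi', hb, ha⟩
          have := hr23 (decide_eq_true hp)
          rw [ha, hb]
          omega


lemma exists_discard_of_veryBasic {D : Finset (Sym2 V)} (hVB : VeryBasic D) (f : Sym2 V) :
    ∃ d : Finset (Sym2 V) → Sym2 V,
      (∀ t ∈ TriSets D, d t ∈ t) ∧ (∀ t ∈ TriSets D, f ∈ t → d t = f) ∧
      (∀ t ∈ TriSets D, ∀ t' ∈ TriSets D, t ≠ t' → ∀ g ∈ t ∩ t', d t = g ∨ d t' = g) := by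
  classical
  rcases hVB with ⟨φ, hinj, hadj⟩ | ⟨m, φ, hinj, hadj⟩
  · exact exists_discard_k3plus f φ hinj hadj
  · apply exists_discard_core f (fun u => if h : u ∈ TriSets D then (φ ⟨u, h⟩).val else 0)
    · intro t ht t' ht' hψ
      rw [dif_pos ht, dif_pos ht'] at hψ
      exact congrArg Subtype.val (hinj (Fin.ext hψ))
    · intro t ht t' ht' hne hi
      have hnes : (⟨t, ht⟩ : TriSets D) ≠ ⟨t', ht'⟩ := fun hh => hne (congrArg Subtype.val hh)
      have := hadj ⟨t, ht⟩ ⟨t', ht'⟩ hnes hi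
      rw [dif_pos ht, dif_pos ht']
      rcases this with h | h
      · right; omega
      · left; omega

lemma exists_goodPairing_of_discard {C : Finset (Sym2 V)} (e b : Sym2 V)
    (hVB : VeryBasic (C.erase b)) :
    ∃ P, GoodPairing C {e} {b} P := by
  classical
  obtain ⟨d, hd1, hd2, hd3⟩ := exists_discard_of_veryBasic hVB e
  refine ⟨((C.erase b).powerset.filter (· ∈ TriSets (C.erase b))).image
    (fun t => t.erase (d t)), ?_, ?_, ?_⟩
  · intro p hp
    rw [Finset.mem_image] at hp
    obtain ⟨t, ht, rfl⟩ := hp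
    rw [Finset.mem_filter, Finset.mem_powerset] at ht
    obtain ⟨htsub, htT⟩ := ht
    have hcard3 : t.card = 3 := by
      obtain ⟨x, y, z, htri, rfl⟩ := htT
      exact triEdges_card htri.1 htri.2.1 htri.2.2.1
    constructor
    · rw [Finset.card_erase_of_mem (hd1 t htT), hcard3]
    · intro x hx
      rw [Finset.mem_erase] at hx
      have hxD : x ∈ C.erase b := htsub hx.2
      rw [Finset.mem_erase] at hxD
      rw [Finset.mem_sdiff, Finset.mem_union, Finset.mem_singleton, Finset.mem_singleton]
      refine ⟨hxD.2, ?_⟩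
      push_neg
      refine ⟨?_, hxD.1⟩
      intro hxe
      subst hxe
      exact hx.1 (hd2 t htT hx.2).symm
  · intro p hp q hq hpq
    rw [Finset.mem_image] at hp hq
    obtain ⟨t, ht, rfl⟩ := hp
    obtain ⟨t', ht', rfl⟩ := hq
    rw [Finset.mem_filter] at ht ht'
    have htne : t ≠ t' := fun hh => hpq (hh ▸ rfl)
    rw [Finset.disjoint_left]
    intro x hx hx'
    rw [Finset.mem_erase] at hx hx'
    have : d t = x ∨ d t' = x := hd3 t ht.2 t' ht'.2 htne x
      (Finset.mem_inter.2 ⟨hx.2, hx'.2⟩)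
    rcases this with h | h
    · exact hx.1 h.symm
    · exact hx'.1 h.symm
  · intro x y z htri hB
    have htriD : IsTriangleIn (C.erase b) x y z := by
      obtain ⟨h1, h2, h3, h4, h5, h6⟩ := htri
      have m1 : s(x, y) ∈ triEdges x y z := by rw [mem_triEdges]; tauto
      have m2 : s(y, z) ∈ triEdges x y z := by rw [mem_triEdges]; tauto
      have m3 : s(x, z) ∈ triEdges x y z := by rw [mem_triEdges]; tauto
      refine ⟨h1, h2, h3, ?_, ?_, ?_⟩ <;> rw [Finset.mem_erase]
      · exact ⟨by simpa using hB _ m1, h4⟩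
      · exact ⟨by simpa using hB _ m2, h5⟩
      · exact ⟨by simpa using hB _ m3, h6⟩
    have htT : triEdges x y z ∈ TriSets (C.erase b) := mem_TriSets htriD
    refine ⟨(triEdges x y z).erase (d (triEdges x y z)), ?_, Finset.erase_subset _ _⟩
    rw [Finset.mem_image]
    exact ⟨triEdges x y z, by
      rw [Finset.mem_filter, Finset.mem_powerset]
      exact ⟨TriSets_subset htT, htT⟩, rfl⟩

/-- On a basic graph, Breaker prevents triangles in the unbiased
Maker-Breaker game. -/
theorem basic_breaker_blocks {V : Type*} [DecidableEq V]
    (C : Finset (Sym2 V)) (hC : Basic C) :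
    BreakerBlock C HasTriangle 1 ∅ ∅ := by
  classical
  obtain ⟨e₁, he₁, e₂, he₂, hne12, hVB1, hVB2⟩ := hC
  have hresp_mem : ∀ e, e ∈ C → e ∉ (∅ : Finset (Sym2 V)) ∪ ∅ →
      ∀ x ∈ (if e = e₁ then ({e₂} : Finset (Sym2 V)) else {e₁}),
        x ∈ C \ (insert e ∅ ∪ ∅) := by
    intro e heC hefree x hx
    rw [Finset.mem_sdiff]
    split_ifs at hx with h
    · rw [Finset.mem_singleton] at hx
      subst hx
      subst h
      refine ⟨he₂, ?_⟩
      simp only [Finset.union_empty, Finset.mem_insert, Finset.notMem_empty, or_false]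
      exact Ne.symm hne12
    · rw [Finset.mem_singleton] at hx
      subst hx
      refine ⟨he₁, ?_⟩
      simp only [Finset.union_empty, Finset.mem_insert, Finset.notMem_empty, or_false]
      exact fun hh => h hh.symm
  refine BreakerBlock.step ∅ ∅ ?_ (fun e => if e = e₁ then {e₂} else {e₁}) ?_ ?_ ?_
  · rintro ⟨x, y, z, _, _, _, h, _, _⟩
    exact absurd h (Finset.notMem_empty _)
  · intro e heC hefree
    intro x hx
    exact hresp_mem e heC hefree x hx
  · intro e heC hefree
    have hone : (if e = e₁ then ({e₂} : Finset (Sym2 V)) else {e₁}).card = 1 := by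
      split_ifs <;> exact Finset.card_singleton _
    rw [hone]
    have hne' : (C \ (insert e ∅ ∪ ∅)).Nonempty := by
      by_cases h : e = e₁
      · exact ⟨e₂, hresp_mem e heC hefree e₂ (by rw [if_pos h]; exact Finset.mem_singleton_self _)⟩
      · exact ⟨e₁, hresp_mem e heC hefree e₁ (by rw [if_neg h]; exact Finset.mem_singleton_self _)⟩
    have := Finset.card_pos.2 hne'
    exact (min_eq_left (by omega)).symm
  · intro e heC hefree
    have hMX : insert e (∅ : Finset (Sym2 V)) ⊆ C := by
      intro x hx
      simp only [Finset.mem_insert, Finset.notMem_empty, or_false] at hx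
      rw [hx]; exact heC
    by_cases h : e = e₁
    · obtain ⟨P, hP⟩ := exists_goodPairing_of_discard e e₂ hVB2
      have hM : insert e (∅ : Finset (Sym2 V)) = {e} := rfl
      have hB : (∅ : Finset (Sym2 V)) ∪ (if e = e₁ then ({e₂} : Finset (Sym2 V)) else {e₁})
          = {e₂} := by
        rw [Finset.empty_union, if_pos h]
      rw [hM, hB]
      apply breaker_of_pairing C (C \ ({e} ∪ {e₂})).card {e} {e₂} le_rfl
        (by rw [← hM]; exact hMX)
      · intro g hg
        rw [Finset.mem_singleton] at hg
        subst hg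
        rw [Finset.mem_singleton]
        exact fun hh => hne12 (h.symm.trans hh)
      · exact ⟨P, hP⟩
    · obtain ⟨P, hP⟩ := exists_goodPairing_of_discard e e₁ hVB1
      have hM : insert e (∅ : Finset (Sym2 V)) = {e} := rfl
      have hB : (∅ : Finset (Sym2 V)) ∪ (if e = e₁ then ({e₂} : Finset (Sym2 V)) else {e₁})
          = {e₁} := by
        rw [Finset.empty_union, if_neg h]
      rw [hM, hB]
      apply breaker_of_pairing C (C \ ({e} ∪ {e₁})).card {e} {e₁} le_rfl
        (by rw [← hM]; exact hMX)
      · intro g hg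
        rw [Finset.mem_singleton] at hg
        subst hg
        rw [Finset.mem_singleton]
        exact h
      · exact ⟨P, hP⟩



end TournamentGame
end

section
/- Breaker has a strategy to prevent Maker from creating a cyclic (directed) triangle in the unbiased T_C-tournament game played on the edge set of the complete graph K₄, even if Maker is allowed to claim and orient two edges in her first turn (and one edge per turn thereafter). -/
/-!
Relabelling the vertices carries Breaker strategies to Breaker strategies, so Maker's first
move only matters up to symmetry: it is a directed path, two arcs into a vertex, two arcs out
of a vertex, or a matching. After Breaker's reply just three edges of `K₄` are free, and for
each of the four first moves the remaining game tree is checked exhaustively.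
-/

namespace TournamentGame

variable {V : Type*}

section Search

variable [DecidableEq V] [Fintype V]

instance (M : Finset (V × V)) : Decidable (HasCyclicTriangle M) := by
  unfold HasCyclicTriangle; infer_instance

/-- Exhaustive search of the game tree below a position with Maker to move. The fuel `n`
bounds the number of Maker moves; running out of fuel answers `false`, so `true` certifies
`OBreakerBlock`. -/
def blockSearch (X : Finset (Sym2 V)) (F : Finset (V × V) → Prop) [DecidablePred F] (b : ℕ) :
    ℕ → Finset (V × V) → Finset (Sym2 V) → Bool
  | 0, _, _ => false
  | n + 1, M, B => decide (¬ F M ∧ ∀ x y : V, s(x, y) ∈ X → s(x, y) ∉ undirect M ∪ B →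
      ∃ B' ∈ (X \ (insert s(x, y) (undirect M) ∪ B)).powersetCard
          (min b (X \ (insert s(x, y) (undirect M) ∪ B)).card),
        blockSearch X F b n (insert (x, y) M) (B ∪ B') = true)

variable {X : Finset (Sym2 V)} {F : Finset (V × V) → Prop} [DecidablePred F] {b : ℕ}

theorem OBreakerBlock.of_blockSearch :
    ∀ {n : ℕ} {M : Finset (V × V)} {B : Finset (Sym2 V)},
      blockSearch X F b n M B = true → OBreakerBlock X F b M B
  | 0, _, _, h => by simp [blockSearch] at h
  | n + 1, M, B, h => by
    rw [blockSearch, decide_eq_true_iff] at h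
    obtain ⟨hF, hmoves⟩ := h
    choose resp hresp hsearch using hmoves
    refine .step M B hF (fun x y => if h : s(x, y) ∈ X ∧ s(x, y) ∉ undirect M ∪ B
      then resp x y h.1 h.2 else ∅) ?_ ?_ ?_ <;> intro x y hx hfree <;>
      simp only [dif_pos (And.intro hx hfree)]
    · exact (Finset.mem_powersetCard.1 (hresp x y hx hfree)).1
    · exact (Finset.mem_powersetCard.1 (hresp x y hx hfree)).2
    · exact of_blockSearch (hsearch x y hx hfree)

theorem OBreakerTurn.of_blockSearch {n : ℕ} {M : Finset (V × V)} {B : Finset (Sym2 V)}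
    (h : ¬ F M ∧ ∃ B' ∈ (X \ (undirect M ∪ B)).powersetCard (min b (X \ (undirect M ∪ B)).card),
      blockSearch X F b n M (B ∪ B') = true) :
    OBreakerTurn X F b M B := by
  obtain ⟨hF, B', hB', hsearch⟩ := h
  obtain ⟨hsub, hcard⟩ := Finset.mem_powersetCard.1 hB'
  exact ⟨hF, B', hsub, hcard, .of_blockSearch hsearch⟩

end Search

section Relabel

variable {W : Type*} (e : V ≃ W)

theorem HasCyclicTriangle.of_map {M : Finset (V × V)}
    (h : HasCyclicTriangle (M.map (e.toEmbedding.prodMap e.toEmbedding))) :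
    HasCyclicTriangle M := by
  obtain ⟨x, y, z, hxy, hyz, hxz, h₁, h₂, h₃⟩ := h
  obtain ⟨x, rfl⟩ := e.surjective x
  obtain ⟨y, rfl⟩ := e.surjective y
  obtain ⟨z, rfl⟩ := e.surjective z
  have mem_map {u v : V} : (e u, e v) ∈ M.map (e.toEmbedding.prodMap e.toEmbedding) →
      (u, v) ∈ M :=
    (Finset.mem_map' (e.toEmbedding.prodMap e.toEmbedding) (a := (u, v))).1
  exact ⟨x, y, z, e.injective.ne_iff.1 hxy, e.injective.ne_iff.1 hyz, e.injective.ne_iff.1 hxz,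
    mem_map h₁, mem_map h₂, mem_map h₃⟩

variable [DecidableEq V] [DecidableEq W] {X : Finset (Sym2 V)} {F : Finset (V × V) → Prop}
  {G : Finset (W × W) → Prop} {b : ℕ}

theorem undirect_map (M : Finset (V × V)) :
    undirect (M.map (e.toEmbedding.prodMap e.toEmbedding)) =
      (undirect M).map e.toEmbedding.sym2Map := by
  simp only [undirect, Finset.map_eq_image, Finset.image_image]
  rfl

theorem sdiff_insert_undirect_union_map (B : Finset (Sym2 V)) (M : Finset (V × V)) (x y : V) :
    (X \ (insert s(x, y) (undirect M) ∪ B)).map e.toEmbedding.sym2Map =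
      X.map e.toEmbedding.sym2Map \
        (insert s(e x, e y) (undirect (M.map (e.toEmbedding.prodMap e.toEmbedding))) ∪
          B.map e.toEmbedding.sym2Map) := by
  simp only [Finset.map_sdiff, Finset.map_union, Finset.map_insert, undirect_map]
  rfl

theorem OBreakerBlock.map
    (hG : ∀ M, G (M.map (e.toEmbedding.prodMap e.toEmbedding)) → F M)
    {M : Finset (V × V)} {B : Finset (Sym2 V)} (h : OBreakerBlock X F b M B) :
    OBreakerBlock (X.map e.toEmbedding.sym2Map) G b
      (M.map (e.toEmbedding.prodMap e.toEmbedding)) (B.map e.toEmbedding.sym2Map) := by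
  induction h with
  | step M B hF resp hsub hcard _ ih =>
    refine .step _ _ (fun hGM => hF (hG M hGM))
      (fun x y => (resp (e.symm x) (e.symm y)).map e.toEmbedding.sym2Map) ?_ ?_ ?_ <;>
      intro x y hx hfree <;>
      obtain ⟨x, rfl⟩ := e.surjective x <;> obtain ⟨y, rfl⟩ := e.surjective y <;>
      simp only [Equiv.symm_apply_apply]
    all_goals
      have hx : s(x, y) ∈ X := (Finset.mem_map' e.toEmbedding.sym2Map (a := s(x, y))).1 hx
      rw [undirect_map, ← Finset.map_union] at hfree
      have hfree : s(x, y) ∉ undirect M ∪ B :=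
        mt (Finset.mem_map' e.toEmbedding.sym2Map (a := s(x, y))).2 hfree
    · rw [← sdiff_insert_undirect_union_map]
      exact Finset.map_subset_map.2 (hsub x y hx hfree)
    · rw [← sdiff_insert_undirect_union_map, Finset.card_map, Finset.card_map]
      exact hcard x y hx hfree
    · have := ih x y hx hfree
      rw [Finset.map_insert, Finset.map_union] at this
      exact this

theorem OBreakerTurn.map
    (hG : ∀ M, G (M.map (e.toEmbedding.prodMap e.toEmbedding)) → F M)
    {M : Finset (V × V)} {B : Finset (Sym2 V)} (h : OBreakerTurn X F b M B) :
    OBreakerTurn (X.map e.toEmbedding.sym2Map) G b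
      (M.map (e.toEmbedding.prodMap e.toEmbedding)) (B.map e.toEmbedding.sym2Map) := by
  obtain ⟨hF, B', hsub, hcard, hblock⟩ := h
  have hfree : (X \ (undirect M ∪ B)).map e.toEmbedding.sym2Map =
      X.map e.toEmbedding.sym2Map \
        (undirect (M.map (e.toEmbedding.prodMap e.toEmbedding)) ∪ B.map e.toEmbedding.sym2Map) := by
    simp only [Finset.map_sdiff, Finset.map_union, undirect_map]
  refine ⟨fun hGM => hF (hG M hGM), B'.map e.toEmbedding.sym2Map, ?_, ?_, ?_⟩
  · rw [← hfree]
    exact Finset.map_subset_map.2 hsub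
  · rw [← hfree, Finset.card_map, Finset.card_map]
    exact hcard
  · have := hblock.map e hG
    rwa [Finset.map_union] at this

end Relabel

theorem completeEdges_map (n : ℕ) (σ : Equiv.Perm (Fin n)) :
    (completeEdges n).map σ.toEmbedding.sym2Map = completeEdges n := by
  refine Finset.eq_of_subset_of_card_le (fun _ hmap => ?_) (Finset.card_map _).ge
  obtain ⟨e, he, rfl⟩ := Finset.mem_map.1 hmap
  simpa [completeEdges, Sym2.isDiag_map σ.injective] using he

def canonicalFirstMove : Fin 4 → Finset (Fin 4 × Fin 4) :=
  ![{(0, 1), (1, 2)}, {(0, 1), (2, 1)}, {(1, 0), (1, 2)}, {(0, 1), (2, 3)}]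

theorem exists_perm_map_canonicalFirstMove :
    ∀ x₁ y₁ x₂ y₂ : Fin 4, x₁ ≠ y₁ → x₂ ≠ y₂ → s(x₁, y₁) ≠ s(x₂, y₂) →
      ∃ σ : Equiv.Perm (Fin 4), ∃ i, {(x₁, y₁), (x₂, y₂)} =
        (canonicalFirstMove i).map (σ.toEmbedding.prodMap σ.toEmbedding) := by
  decide

theorem oBreakerTurn_canonicalFirstMove (i : Fin 4) :
    OBreakerTurn (completeEdges 4) HasCyclicTriangle 1 (canonicalFirstMove i) ∅ := by
  fin_cases i <;> exact OBreakerTurn.of_blockSearch (n := 3) (by decide)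

/-- On `K₄`, Breaker prevents cyclic triangles in the unbiased
`T_C`-tournament game, even if Maker claims and orients two edges in her first turn. -/
theorem breaker_blocks_K4 :
    ∀ x₁ y₁ x₂ y₂ : Fin 4, x₁ ≠ y₁ → x₂ ≠ y₂ → s(x₁, y₁) ≠ s(x₂, y₂) →
      OBreakerTurn (completeEdges 4) HasCyclicTriangle 1 {(x₁, y₁), (x₂, y₂)} ∅ := by
  intro x₁ y₁ x₂ y₂ h₁ h₂ h₁₂
  obtain ⟨σ, i, hM⟩ := exists_perm_map_canonicalFirstMove x₁ y₁ x₂ y₂ h₁ h₂ h₁₂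
  rw [hM, ← completeEdges_map 4 σ, ← Finset.map_empty σ.toEmbedding.sym2Map]
  exact (oBreakerTurn_canonicalFirstMove i).map σ fun _ => HasCyclicTriangle.of_map σ

end TournamentGame
end

section
/- For every k ≥ 3, Breaker has a strategy to prevent Maker from claiming all three edges of any triangle in the unbiased Maker-Breaker game played on the edge set of the k-wheel W_k. -/
namespace TournamentGame

variable {V : Type*} [DecidableEq V]

/-! ### Auxiliary machinery for Statement 18 -/

open Finset in
/-- Bounded-depth game evaluator for the (1:1) game: returns `true` if Breaker can keep
blocking for `n` more rounds. -/
def bwAux (X : Finset (Sym2 V)) (F : Finset (Sym2 V) → Bool) :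
    ℕ → Finset (Sym2 V) → Finset (Sym2 V) → Bool
  | 0, _, _ => false
  | n+1, M, B => !F M &&
      decide (∀ e ∈ X \ (M ∪ B),
        (if (X \ (insert e M ∪ B)).card = 0 then bwAux X F n (insert e M) B
         else decide (∃ f ∈ X \ (insert e M ∪ B),
            bwAux X F n (insert e M) (B ∪ {f}) = true)) = true)

open Finset in
open Classical in
lemma bwAux_sound (X : Finset (Sym2 V)) (F : Finset (Sym2 V) → Prop) [DecidablePred F] :
    ∀ n (M B : Finset (Sym2 V)), bwAux X (fun M => decide (F M)) n M B = true →
    BreakerBlock X F 1 M B := by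
  intro n
  induction n with
  | zero => intro M B h; simp [bwAux] at h
  | succ n ih =>
    intro M B h
    rw [bwAux] at h
    simp only [Bool.and_eq_true, Bool.not_eq_true', decide_eq_false_iff_not,
      decide_eq_true_eq] at h
    obtain ⟨hF, hall⟩ := h
    refine BreakerBlock.step M B hF
      (fun e => if h : ∃ f ∈ X \ (insert e M ∪ B),
          bwAux X (fun M => decide (F M)) n (insert e M) (B ∪ {f}) = true
        then {h.choose} else ∅) ?_ ?_ ?_
    · intro e heX hefree
      beta_reduce
      by_cases hc : ∃ f ∈ X \ (insert e M ∪ B),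
          bwAux X (fun M => decide (F M)) n (insert e M) (B ∪ {f}) = true
      · rw [dif_pos hc]
        exact singleton_subset_iff.2 hc.choose_spec.1
      · rw [dif_neg hc]
        exact empty_subset _
    · intro e heX hefree
      beta_reduce
      have hb := hall e (mem_sdiff.2 ⟨heX, hefree⟩)
      by_cases hc0 : (X \ (insert e M ∪ B)).card = 0
      · have hc0' := hc0
        rw [card_eq_zero] at hc0'
        have hne : ¬ ∃ f ∈ X \ (insert e M ∪ B),
            bwAux X (fun M => decide (F M)) n (insert e M) (B ∪ {f}) = true := by
          rw [hc0']; simp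
        rw [dif_neg hne, card_empty, hc0]; simp
      · rw [if_neg hc0, decide_eq_true_eq] at hb
        rw [dif_pos hb, card_singleton]
        omega
    · intro e heX hefree
      beta_reduce
      have hb := hall e (mem_sdiff.2 ⟨heX, hefree⟩)
      by_cases hc0 : (X \ (insert e M ∪ B)).card = 0
      · have hc0' := hc0
        rw [card_eq_zero] at hc0'
        have hne : ¬ ∃ f ∈ X \ (insert e M ∪ B),
            bwAux X (fun M => decide (F M)) n (insert e M) (B ∪ {f}) = true := by
          rw [hc0']; simp
        rw [if_pos hc0] at hb
        rw [dif_neg hne, union_empty]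
        exact ih _ _ hb
      · rw [if_neg hc0, decide_eq_true_eq] at hb
        rw [dif_pos hb]
        exact ih _ _ hb.choose_spec.2

open Finset in
/-- A pairing strategy certificate yields a Breaker blocking strategy. -/
lemma pairing_block (X : Finset (Sym2 V)) (F : Finset (Sym2 V) → Prop)
    (π : Sym2 V → Sym2 V) :
    ∀ n (M B : Finset (Sym2 V)), (X \ (M ∪ B)).card ≤ n →
    (∀ e ∈ X \ (M ∪ B), π e ∈ X \ (M ∪ B) ∧ π (π e) = e ∧ π e ≠ e) →
    (∀ M' : Finset (Sym2 V), M ⊆ M' → M' ⊆ M ∪ (X \ (M ∪ B)) →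
      (∀ e ∈ X \ (M ∪ B), e ∈ M' → π e ∉ M') → ¬ F M') →
    BreakerBlock X F 1 M B := by
  intro n
  induction n with
  | zero =>
    intro M B hn hπ hF
    have hnofree : ∀ e ∈ X, e ∉ M ∪ B → False := by
      intro e heX hefree
      have h1 : e ∈ X \ (M ∪ B) := mem_sdiff.2 ⟨heX, hefree⟩
      have hD : X \ (M ∪ B) = ∅ := card_eq_zero.1 (Nat.le_zero.1 hn)
      rw [hD] at h1
      exact notMem_empty _ h1
    refine BreakerBlock.step M B ?_ (fun _ => ∅) ?_ ?_ ?_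
    · refine hF M subset_rfl subset_union_left ?_
      intro e he heM
      exact ((mem_sdiff.1 he).2 (mem_union_left B heM)).elim
    · intro e heX hefree; exact (hnofree e heX hefree).elim
    · intro e heX hefree; exact (hnofree e heX hefree).elim
    · intro e heX hefree; exact (hnofree e heX hefree).elim
  | succ n ih =>
    intro M B hn hπ hF
    refine BreakerBlock.step M B ?_ (fun e => {π e}) ?_ ?_ ?_
    · refine hF M subset_rfl subset_union_left ?_
      intro e he heM
      exact ((mem_sdiff.1 he).2 (mem_union_left B heM)).elim
    · intro e heX hefree
      have he : e ∈ X \ (M ∪ B) := mem_sdiff.2 ⟨heX, hefree⟩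
      obtain ⟨hmem, _, hne⟩ := hπ e he
      rw [singleton_subset_iff, mem_sdiff]
      rw [mem_sdiff] at hmem
      refine ⟨hmem.1, ?_⟩
      rw [mem_union, mem_insert]
      rintro (h | h)
      · rcases h with h | h
        · exact hne h
        · exact hmem.2 (mem_union_left _ h)
      · exact hmem.2 (mem_union_right _ h)
    · intro e heX hefree
      have he : e ∈ X \ (M ∪ B) := mem_sdiff.2 ⟨heX, hefree⟩
      obtain ⟨hmem, _, hne⟩ := hπ e he
      rw [card_singleton]
      have hpe : π e ∈ X \ (insert e M ∪ B) := by
        rw [mem_sdiff] at hmem ⊢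
        refine ⟨hmem.1, ?_⟩
        rw [mem_union, mem_insert]
        rintro ((h | h) | h)
        · exact hne h
        · exact hmem.2 (mem_union_left _ h)
        · exact hmem.2 (mem_union_right _ h)
      have : 1 ≤ (X \ (insert e M ∪ B)).card := card_pos.2 ⟨_, hpe⟩
      omega
    · intro e heX hefree
      have he : e ∈ X \ (M ∪ B) := mem_sdiff.2 ⟨heX, hefree⟩
      obtain ⟨hmem, hinv, hne⟩ := hπ e he
      have hDsub : X \ (insert e M ∪ (B ∪ {π e})) ⊆ (X \ (M ∪ B)).erase e := by
        intro f hf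
        simp only [mem_sdiff, mem_union, mem_insert, mem_singleton] at hf
        push_neg at hf
        simp only [mem_erase, mem_sdiff, mem_union]
        push_neg
        exact ⟨hf.2.1.1, hf.1, hf.2.1.2, hf.2.2.1⟩
      have hmemD : ∀ f ∈ X \ (insert e M ∪ (B ∪ {π e})),
          f ∈ X \ (M ∪ B) ∧ f ≠ e ∧ f ≠ π e := by
        intro f hf
        rw [mem_sdiff, mem_union, mem_union, mem_insert, mem_singleton] at hf
        push_neg at hf
        exact ⟨mem_sdiff.2 ⟨hf.1, by rw [mem_union]; tauto⟩, hf.2.1.1, hf.2.2.2⟩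
      refine ih (insert e M) (B ∪ {π e}) ?_ ?_ ?_
      · have h1 := card_le_card hDsub
        have h2 := card_erase_lt_of_mem he
        omega
      · intro f hf
        obtain ⟨hfD, hfe, hfpe⟩ := hmemD f hf
        obtain ⟨hfmem, hfinv, hfne⟩ := hπ f hfD
        refine ⟨?_, hfinv, hfne⟩
        rw [mem_sdiff] at hfmem ⊢
        refine ⟨hfmem.1, ?_⟩
        rw [mem_union, mem_union, mem_insert, mem_singleton]
        push_neg
        have h1 : π f ≠ e := by
          intro h
          apply hfpe
          rw [← hfinv, h]
        have h2 : π f ≠ π e := by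
          intro h
          apply hfe
          have := congrArg π h
          rw [hfinv, hinv] at this
          exact this
        have h3 : π f ∉ M := fun h => hfmem.2 (mem_union_left _ h)
        have h4 : π f ∉ B := fun h => hfmem.2 (mem_union_right _ h)
        exact ⟨⟨h1, h3⟩, h4, h2⟩
      · intro M' hM'1 hM'2 hfree
        refine hF M' (subset_trans (subset_insert e M) hM'1) ?_ ?_
        · intro g hg
          have := hM'2 hg
          rw [mem_union, mem_insert] at this
          rw [mem_union]
          rcases this with (rfl | h) | h
          · exact Or.inr he
          · exact Or.inl h
          · exact Or.inr ((hmemD g h).1)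
        · intro f hfD' hfM'
          by_cases hfe : f = e
          · subst hfe
            intro hcon
            have := hM'2 hcon
            rw [mem_union, mem_insert] at this
            rcases this with (h | h) | h
            · exact hne h
            · exact (mem_sdiff.1 hmem).2 (mem_union_left _ h)
            · exact (hmemD _ h).2.2 rfl
          · have hfM : f ∉ M ∪ B := (mem_sdiff.1 hfD').2
            have hfD2 : f ∈ X \ (insert e M ∪ (B ∪ {π e})) := by
              have := hM'2 hfM'
              rw [mem_union, mem_insert] at this
              rcases this with (h | h) | h
              · exact absurd h hfe
              · exact absurd (mem_union_left B h) hfM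
              · exact h
            obtain ⟨_, hfinv, hfne⟩ := hπ f hfD'
            intro hcon
            have := hM'2 hcon
            rw [mem_union, mem_insert] at this
            rcases this with (h | h) | h
            · apply (hmemD f hfD2).2.2
              rw [← hfinv, h]
            · exact (mem_sdiff.1 (hπ f hfD').1).2 (mem_union_left _ h)
            · exact (hfree f hfD2 hfM' hcon).elim

/-- predecessor cycle edge of a rim vertex -/
def spPair (k : ℕ) (hk : 0 < k) (b : Fin (k+1)) : Sym2 (Fin (k+1)) :=
  s((⟨(b.val + (k-1)) % k, Nat.lt_succ_of_lt (Nat.mod_lt _ hk)⟩ : Fin (k+1)), b)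

def gPair (k : ℕ) (a b : Fin (k+1)) : Sym2 (Fin (k+1)) :=
  if hk : 0 < k then
    if a = b then s(a, b)
    else if a = Fin.last k then spPair k hk b
    else if b = Fin.last k then spPair k hk a
    else if (a.val + 1) % k = b.val ∧ (b.val + 1) % k = a.val then s(a, b)
    else if (a.val + 1) % k = b.val then s(b, Fin.last k)
    else if (b.val + 1) % k = a.val then s(a, Fin.last k)
    else s(a, b)
  else s(a, b)

lemma gPair_symm (k : ℕ) (a b : Fin (k+1)) : gPair k a b = gPair k b a := by
  unfold gPair
  split_ifs <;>
    first
      | rfl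
      | exact Sym2.eq_swap
      | tauto
      | (subst_vars; tauto)

def wheelPair (k : ℕ) : Sym2 (Fin (k+1)) → Sym2 (Fin (k+1)) :=
  Sym2.lift ⟨gPair k, gPair_symm k⟩

lemma wheelPair_mk (k : ℕ) (a b : Fin (k+1)) : wheelPair k s(a, b) = gPair k a b := rfl

lemma succ_mod_lemma (k u v : ℕ) (hu : u < k) (hv : v < k) :
    (u + 1) % k = v ↔ (u + 1 = v ∨ (u + 1 = k ∧ v = 0)) := by
  rcases Nat.lt_or_ge (u + 1) k with h | h
  · rw [Nat.mod_eq_of_lt h]; omega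
  · have hek : u + 1 = k := by omega
    rw [hek, Nat.mod_self]; constructor <;> omega

open Finset in
lemma mem_wheelEdges_iff (k : ℕ) (e : Sym2 (Fin (k+1))) :
    e ∈ wheelEdges k ↔
      (∃ a b : Fin (k+1), e = s(a, b) ∧ a.val < k ∧ b.val < k ∧ (a.val + 1) % k = b.val) ∨
      (∃ a : Fin (k+1), e = s(a, Fin.last k) ∧ a.val < k) := by
  unfold wheelEdges
  rw [mem_union, mem_image, mem_image]
  constructor
  · rintro (⟨i, _, rfl⟩ | ⟨i, _, rfl⟩)
    · left
      refine ⟨_, _, rfl, i.2, Nat.mod_lt _ (by have := i.2; omega), rfl⟩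
    · right
      exact ⟨_, rfl, i.2⟩
  · rintro (⟨a, b, rfl, ha, hb, hab⟩ | ⟨a, rfl, ha⟩)
    · left
      refine ⟨⟨a.val, ha⟩, mem_univ _, ?_⟩
      rw [Sym2.eq_iff]
      left
      constructor <;> exact Fin.ext (by simp [hab])
    · right
      refine ⟨⟨a.val, ha⟩, mem_univ _, ?_⟩
      rw [Sym2.eq_iff]
      left
      exact ⟨Fin.ext rfl, rfl⟩

lemma wheelPair_cyc (k : ℕ) (hk : 3 ≤ k) (a b : Fin (k+1))
    (ha : a.val < k) (hb : b.val < k) (hab : (a.val + 1) % k = b.val) :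
    wheelPair k s(a, b) = s(b, Fin.last k) := by
  rw [wheelPair_mk]
  unfold gPair
  have h0 : 0 < k := by omega
  rw [dif_pos h0]
  have hne : a ≠ b := by
    intro h
    subst h
    rw [succ_mod_lemma k _ _ ha ha] at hab
    omega
  have hal : a ≠ Fin.last k := by
    intro h; rw [h] at ha; simp at ha
  have hbl : b ≠ Fin.last k := by
    intro h; rw [h] at hb; simp at hb
  have hboth : ¬((a.val + 1) % k = b.val ∧ (b.val + 1) % k = a.val) := by
    rw [succ_mod_lemma k _ _ ha hb, succ_mod_lemma k _ _ hb ha]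
    omega
  rw [if_neg hne, if_neg hal, if_neg hbl, if_neg hboth, if_pos hab]

lemma wheelPair_spk (k : ℕ) (hk : 3 ≤ k) (a : Fin (k+1)) (ha : a.val < k) :
    wheelPair k s(a, Fin.last k) =
      s((⟨(a.val + (k-1)) % k, Nat.lt_succ_of_lt (Nat.mod_lt _ (by omega))⟩ : Fin (k+1)), a) := by
  rw [wheelPair_mk]
  unfold gPair
  have h0 : 0 < k := by omega
  rw [dif_pos h0]
  have hal : a ≠ Fin.last k := by
    intro h; rw [h] at ha; simp at ha
  rw [if_neg hal, if_neg hal, if_pos rfl]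
  rfl

lemma wheelPair_good (k : ℕ) (hk : 3 ≤ k) :
    ∀ e ∈ wheelEdges k, wheelPair k e ∈ wheelEdges k ∧
      wheelPair k (wheelPair k e) = e ∧ wheelPair k e ≠ e := by
  intro e he
  have h0 : 0 < k := by omega
  rw [mem_wheelEdges_iff] at he
  rcases he with ⟨a, b, rfl, ha, hb, hab⟩ | ⟨a, rfl, ha⟩
  · rw [wheelPair_cyc k hk a b ha hb hab]
    refine ⟨?_, ?_, ?_⟩
    · rw [mem_wheelEdges_iff]; right; exact ⟨b, rfl, hb⟩
    · rw [wheelPair_spk k hk b hb]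
      have hcval : (b.val + (k-1)) % k = a.val := by
        rw [← hab, Nat.mod_add_mod]
        have : a.val + 1 + (k - 1) = a.val + k := by omega
        rw [this, Nat.add_mod_right, Nat.mod_eq_of_lt ha]
      rw [Sym2.eq_iff]
      left
      exact ⟨Fin.ext hcval, rfl⟩
    · intro h
      rw [Sym2.eq_iff] at h
      have hlast : (Fin.last k).val = k := by simp
      rcases h with ⟨h1, h2⟩ | ⟨h1, h2⟩
      · have := congrArg Fin.val h2; omega
      · have := congrArg Fin.val h2; omega
  · rw [wheelPair_spk k hk a ha]
    set c : Fin (k+1) := ⟨(a.val + (k-1)) % k, Nat.lt_succ_of_lt (Nat.mod_lt _ h0)⟩ with hc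
    have hcval : c.val < k := Nat.mod_lt _ h0
    have hca : (c.val + 1) % k = a.val := by
      show ((a.val + (k-1)) % k + 1) % k = a.val
      rw [Nat.mod_add_mod]
      have : a.val + (k-1) + 1 = a.val + k := by omega
      rw [this, Nat.add_mod_right, Nat.mod_eq_of_lt ha]
    refine ⟨?_, ?_, ?_⟩
    · rw [mem_wheelEdges_iff]; left; exact ⟨c, a, rfl, hcval, ha, hca⟩
    · rw [wheelPair_cyc k hk c a hcval ha hca]
    · intro h
      rw [Sym2.eq_iff] at h
      have hlast : (Fin.last k).val = k := by simp
      rcases h with ⟨h1, h2⟩ | ⟨h1, h2⟩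
      · have := congrArg Fin.val h2; omega
      · have := congrArg Fin.val h1; omega

lemma wheel_edge_nonhub (k : ℕ) (u v : Fin (k+1)) (hu : u ≠ Fin.last k) (hv : v ≠ Fin.last k)
    (h : s(u, v) ∈ wheelEdges k) :
    u.val < k ∧ v.val < k ∧ ((u.val + 1) % k = v.val ∨ (v.val + 1) % k = u.val) := by
  have hu' : u.val < k := by
    have := u.2; rcases Nat.lt_or_ge u.val k with h' | h'
    · exact h'
    · exact absurd (Fin.ext (by rw [Fin.val_last]; omega : u.val = (Fin.last k).val)) hu
  have hv' : v.val < k := by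
    have := v.2; rcases Nat.lt_or_ge v.val k with h' | h'
    · exact h'
    · exact absurd (Fin.ext (by rw [Fin.val_last]; omega : v.val = (Fin.last k).val)) hv
  refine ⟨hu', hv', ?_⟩
  rw [mem_wheelEdges_iff] at h
  rcases h with ⟨a, b, hab, ha, hb, hsucc⟩ | ⟨a, hab, ha⟩
  · rw [Sym2.eq_iff] at hab
    rcases hab with ⟨rfl, rfl⟩ | ⟨rfl, rfl⟩
    · left; exact hsucc
    · right; exact hsucc
  · rw [Sym2.eq_iff] at hab
    rcases hab with ⟨rfl, h2⟩ | ⟨h1, rfl⟩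
    · exact (hv h2).elim
    · exact (hu h1).elim

open Finset in
lemma no_triangle_pairfree (k : ℕ) (hk : 4 ≤ k) (M' : Finset (Sym2 (Fin (k+1))))
    (hsub : M' ⊆ wheelEdges k)
    (hfree : ∀ e ∈ wheelEdges k, e ∈ M' → wheelPair k e ∉ M') :
    ¬ HasTriangle M' := by
  have hk3 : 3 ≤ k := by omega
  rintro ⟨x, y, z, hxy, hyz, hxz, h1, h2, h3⟩
  have key : ∀ u v : Fin (k+1), u ≠ Fin.last k → v ≠ Fin.last k →
      s(u, v) ∈ M' → s(u, Fin.last k) ∈ M' → s(v, Fin.last k) ∈ M' → False := by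
    intro u v hu hv huv hus hvs
    obtain ⟨hu', hv', hrel⟩ := wheel_edge_nonhub k u v hu hv (hsub huv)
    rcases hrel with hr | hr
    · have := hfree s(u, v) (hsub huv) huv
      rw [wheelPair_cyc k hk3 u v hu' hv' hr] at this
      exact this hvs
    · have huv' : s(u, v) = s(v, u) := Sym2.eq_swap
      have := hfree s(u, v) (hsub huv) huv
      rw [huv', wheelPair_cyc k hk3 v u hv' hu' hr] at this
      exact this hus
  by_cases hx : x = Fin.last k
  · subst hx
    have hy : y ≠ Fin.last k := fun h => hxy h.symm
    have hz : z ≠ Fin.last k := fun h => hxz h.symm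
    exact key y z hy hz h2 (Sym2.eq_swap ▸ h1) (Sym2.eq_swap ▸ h3)
  · by_cases hy : y = Fin.last k
    · subst hy
      have hz : z ≠ Fin.last k := fun h => hyz h.symm
      exact key x z hx hz h3 h1 (Sym2.eq_swap ▸ h2)
    · by_cases hz : z = Fin.last k
      · subst hz
        exact key x y hx hy h1 h3 h2
      · obtain ⟨hx', hy', hr1⟩ := wheel_edge_nonhub k x y hx hy (hsub h1)
        obtain ⟨_, hz', hr2⟩ := wheel_edge_nonhub k y z hy hz (hsub h2)
        obtain ⟨_, _, hr3⟩ := wheel_edge_nonhub k x z hx hz (hsub h3)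
        rw [succ_mod_lemma k _ _ hx' hy', succ_mod_lemma k _ _ hy' hx'] at hr1
        rw [succ_mod_lemma k _ _ hy' hz', succ_mod_lemma k _ _ hz' hy'] at hr2
        rw [succ_mod_lemma k _ _ hx' hz', succ_mod_lemma k _ _ hz' hx'] at hr3
        have hxy' : x.val ≠ y.val := fun h => hxy (Fin.ext h)
        have hyz' : y.val ≠ z.val := fun h => hyz (Fin.ext h)
        have hxz' : x.val ≠ z.val := fun h => hxz (Fin.ext h)
        omega

open Finset in
lemma breaker_blocks_wheel_big (k : ℕ) (hk : 4 ≤ k) :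
    BreakerBlock (wheelEdges k) HasTriangle 1 ∅ ∅ := by
  have hk3 : 3 ≤ k := by omega
  have hD : wheelEdges k \ ((∅ : Finset (Sym2 (Fin (k+1)))) ∪ ∅) = wheelEdges k := by simp
  refine pairing_block (wheelEdges k) HasTriangle (wheelPair k)
    (wheelEdges k).card ∅ ∅ ?_ ?_ ?_
  · rw [hD]
  · rw [hD]; exact wheelPair_good k hk3
  · intro M' _ hsub2 hfree
    rw [hD] at hsub2 hfree
    rw [empty_union] at hsub2
    exact no_triangle_pairfree k hk M' hsub2 hfree

instance hasTriangleDecidable {W : Type*} [DecidableEq W] [Fintype W]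
    (M : Finset (Sym2 W)) : Decidable (HasTriangle M) :=
  decidable_of_iff
    (∃ x y z : W, x ≠ y ∧ y ≠ z ∧ x ≠ z ∧ s(x, y) ∈ M ∧ s(y, z) ∈ M ∧ s(x, z) ∈ M)
    Iff.rfl

set_option maxRecDepth 100000 in
lemma breaker_blocks_wheel_three :
    BreakerBlock (wheelEdges 3) HasTriangle 1 ∅ ∅ :=
  bwAux_sound (wheelEdges 3) HasTriangle 7 ∅ ∅ (by decide)

/-- For every `k ≥ 3`, Breaker prevents triangles in the unbiased
Maker-Breaker game on the `k`-wheel `W_k`. -/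
theorem breaker_blocks_wheel (k : ℕ) (hk : 3 ≤ k) :
    BreakerBlock (wheelEdges k) HasTriangle 1 ∅ ∅ := by
  obtain rfl | hk4 : k = 3 ∨ 4 ≤ k := by omega
  · exact breaker_blocks_wheel_three
  · exact breaker_blocks_wheel_big k hk4

end TournamentGame
end
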